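/- arXiv:2104.08279 — 7 statements merged into one kernel-verified Lean document; each statement's English description precedes it below -/
import Mathlib

section
/- Let n ≥ 1, let μ be a Borel probability measure on ℝ with no atoms, and let S_1, …, S_n, T_1, T_2 be i.i.d. random variables with law μ. Let p_1 and p_2 be the marginal conformal p-values of T_1 and T_2 with respect to the calibration scores S_1, …, S_n. Then for every function G : {1/(n+1), 2/(n+1), …, 1} → ℝ one has Cov[G(p_1), G(p_2)] = Var[G(p_1)]/(n+2); in particular, if G is not constant on this grid, then Corr[G(p_1), G(p_2)] = 1/(n+2). -/
open MeasureTheory ProbabilityTheory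
open scoped Classical

/-- The marginal conformal p-value of a test score `T` with respect to
calibration scores `S 1, …, S n`: `p = (1 + #{i : S i ≤ T}) / (n + 1)`. -/
noncomputable def confPval {Ω : Type*} {n : ℕ} (S : Fin n → Ω → ℝ) (T : Ω → ℝ) (ω : Ω) : ℝ :=
  ((1 : ℝ) + (Finset.univ.filter fun i => S i ω ≤ T ω).card) / (n + 1)

/-- Covariance of two real random variables. -/
noncomputable def cov {Ω : Type*} [MeasurableSpace Ω] (μ : Measure Ω) (X Y : Ω → ℝ) : ℝ :=
  ∫ ω, (X ω - ∫ ω', X ω' ∂μ) * (Y ω - ∫ ω', Y ω' ∂μ) ∂μ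

open scoped ENNReal


open MeasureTheory ProbabilityTheory Finset
open scoped Classical

namespace ConfAux

variable {m : ℕ}

/-- rank of coordinate `k` among the values of `x`. -/
noncomputable def rnk (x : Fin m → ℝ) (k : Fin m) : ℕ :=
  (Finset.univ.filter fun i => x i < x k).card

lemma rnk_lt_iff (x : Fin m → ℝ) (i j : Fin m) : rnk x i < rnk x j ↔ x i < x j := by
  constructor
  · intro h
    by_contra hc
    push_neg at hc
    have hsub : (Finset.univ.filter fun k => x k < x j) ⊆
        (Finset.univ.filter fun k => x k < x i) := by
      intro k hk
      simp only [mem_filter, mem_univ, true_and] at hk ⊢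
      exact lt_of_lt_of_le hk hc
    exact absurd (Finset.card_le_card hsub) (by simpa [rnk] using h.not_ge)
  · intro h
    apply Finset.card_lt_card
    constructor
    · intro k hk
      simp only [mem_filter, mem_univ, true_and] at hk ⊢
      exact hk.trans h
    · intro hsub
      have h1 : i ∈ (Finset.univ.filter fun k => x k < x j) := by simp [h]
      have h2 := hsub h1
      simp only [mem_filter, mem_univ, true_and] at h2
      exact absurd h2 (lt_irrefl _)

lemma rnk_lt (x : Fin m → ℝ) (k : Fin m) : rnk x k < m := by
  have : (Finset.univ.filter fun i => x i < x k) ⊆ Finset.univ.erase k := by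
    intro i hi
    simp only [mem_filter, mem_univ, true_and] at hi
    simp only [Finset.mem_erase, Finset.mem_univ, and_true]
    rintro rfl; exact absurd hi (lt_irrefl _)
  have h1 := Finset.card_le_card this
  have h2 : (Finset.univ.erase k).card < m := by
    have := Finset.card_erase_lt_of_mem (Finset.mem_univ k)
    simpa using this
  exact lt_of_le_of_lt h1 h2

lemma rnk_comp (x : Fin m → ℝ) (e : Equiv.Perm (Fin m)) (k : Fin m) :
    rnk (x ∘ e) k = rnk x (e k) := by
  unfold rnk
  apply Finset.card_bij (fun i _ => e i)
  · intro i hi; simp only [mem_filter, mem_univ, true_and] at hi ⊢; exact hi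
  · intro i _ j _ h; exact e.injective h
  · intro i hi
    simp only [mem_filter, mem_univ, true_and] at hi
    refine ⟨e.symm i, ?_, by simp⟩
    simp only [mem_filter, mem_univ, true_and, Function.comp_apply, Equiv.apply_symm_apply]
    exact hi

lemma measurable_rnk (k : Fin m) : Measurable (fun x : Fin m → ℝ => rnk x k) := by
  have : (fun x : Fin m → ℝ => rnk x k)
      = fun x => ∑ i : Fin m, if x i < x k then 1 else 0 := by
    funext x; rw [rnk, Finset.card_filter]
  rw [this]
  apply Finset.measurable_sum
  intro i _
  exact Measurable.ite (measurableSet_lt (measurable_pi_apply i) (measurable_pi_apply k))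
    measurable_const measurable_const

lemma exists_perm_of_inj {x : Fin m → ℝ} (hx : Function.Injective x) :
    ∃ σ : Equiv.Perm (Fin m), ∀ k, rnk x k = σ k := by
  have hinj : Function.Injective (fun k => (⟨rnk x k, rnk_lt x k⟩ : Fin m)) := by
    intro i j h
    by_contra hij
    rcases lt_or_gt_of_ne (fun hxe => hij (hx hxe)) with h1 | h1
    · have := (rnk_lt_iff x i j).2 h1
      simp only [Fin.mk.injEq] at h
      omega
    · have := (rnk_lt_iff x j i).2 h1
      simp only [Fin.mk.injEq] at h
      omega
  have hbij := (Finite.injective_iff_bijective).1 hinj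
  exact ⟨Equiv.ofBijective _ hbij, fun k => rfl⟩

lemma inj_of_rnk_perm {x : Fin m → ℝ} (σ : Equiv.Perm (Fin m))
    (h : ∀ k, rnk x k = σ k) : Function.Injective x := by
  intro i j hij
  by_contra hne
  have : σ i ≠ σ j := fun hc => hne (σ.injective hc)
  have hv : (σ i : ℕ) ≠ (σ j : ℕ) := fun hc => this (Fin.ext hc)
  rw [← h i, ← h j] at hv
  rcases Nat.lt_or_ge (rnk x i) (rnk x j) with h1 | h1
  · exact absurd ((rnk_lt_iff x i j).1 h1) (by simp [hij])
  · rcases lt_or_eq_of_le h1 with h2 | h2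
    · exact absurd ((rnk_lt_iff x j i).1 h2) (by simp [hij])
    · exact hv h2.symm

end ConfAux






namespace ConfAux2

variable {m : ℕ}

lemma card_fiber_const (a b u v u' v' : Fin m) (huv : u ≠ v) (huv' : u' ≠ v') :
    (Finset.univ.filter fun σ : Equiv.Perm (Fin m) => σ a = u ∧ σ b = v).card =
    (Finset.univ.filter fun σ : Equiv.Perm (Fin m) => σ a = u' ∧ σ b = v').card := by
  set τ₁ := Equiv.swap u u' with hτ₁
  set τ₂ := Equiv.swap (τ₁ v) v' with hτ₂
  set τ := τ₁.trans τ₂ with hτ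
  have hτu : τ u = u' := by
    have h1 : τ₁ u = u' := Equiv.swap_apply_left u u'
    have h2 : τ₁ v ≠ u' := by
      intro hc
      have : τ₁ v = τ₁ u := by rw [hc, h1]
      exact huv (τ₁.injective this).symm
    simp only [hτ, Equiv.trans_apply, h1]
    exact Equiv.swap_apply_of_ne_of_ne (Ne.symm h2) huv'
  have hτv : τ v = v' := by
    simp only [hτ, Equiv.trans_apply]
    exact Equiv.swap_apply_left _ _
  apply Finset.card_bij (fun σ _ => σ.trans τ)
  · intro σ hσ
    simp only [mem_filter, mem_univ, true_and, Equiv.trans_apply] at hσ ⊢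
    rw [hσ.1, hσ.2, hτu, hτv]; exact ⟨rfl, rfl⟩
  · intro σ _ σ' _ h
    have : ∀ k, σ k = σ' k := by
      intro k
      have := congrArg (fun e : Equiv.Perm (Fin m) => τ.symm (e k)) h
      simpa using this
    exact Equiv.ext this
  · intro σ' hσ'
    simp only [mem_filter, mem_univ, true_and] at hσ'
    refine ⟨σ'.trans τ.symm, ?_, ?_⟩
    · simp only [mem_filter, mem_univ, true_and, Equiv.trans_apply, hσ'.1, hσ'.2]
      constructor
      · rw [← hτu]; simp
      · rw [← hτv]; simp
    · apply Equiv.ext; intro k; simp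

/-- Group a sum over permutations by the images of two fixed distinct points. -/
lemma sum_perm_group (a b : Fin m) (hab : a ≠ b) (F : Fin m → Fin m → ℝ) :
    ((m * m - m : ℕ) : ℝ) * ∑ σ : Equiv.Perm (Fin m), F (σ a) (σ b)
      = (Nat.factorial m : ℝ) *
        ∑ p ∈ (Finset.univ ×ˢ Finset.univ).filter (fun p : Fin m × Fin m => p.1 ≠ p.2),
          F p.1 p.2 := by
  classical
  set t := (Finset.univ ×ˢ Finset.univ).filter (fun p : Fin m × Fin m => p.1 ≠ p.2) with ht
  have hmaps : ∀ σ : Equiv.Perm (Fin m), σ ∈ Finset.univ →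
      (σ a, σ b) ∈ t := by
    intro σ _
    simp only [ht, mem_filter, mem_product, mem_univ, true_and, and_true]
    exact fun hc => hab (σ.injective hc)
  -- fiberwise sum
  have hsum := Finset.sum_fiberwise_of_maps_to hmaps (fun σ => F (σ a) (σ b))
  -- each fiber sum is card * F p
  have hfiber : ∀ p ∈ t,
      ∑ σ ∈ Finset.univ.filter (fun σ : Equiv.Perm (Fin m) => (σ a, σ b) = p), F (σ a) (σ b)
        = ((Finset.univ.filter fun σ : Equiv.Perm (Fin m) => σ a = p.1 ∧ σ b = p.2).card : ℝ)
            * F p.1 p.2 := by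
    intro p hp
    have hset : (Finset.univ.filter (fun σ : Equiv.Perm (Fin m) => (σ a, σ b) = p))
        = Finset.univ.filter (fun σ : Equiv.Perm (Fin m) => σ a = p.1 ∧ σ b = p.2) := by
      apply Finset.filter_congr; intro σ _; simp [Prod.ext_iff]
    rw [Finset.sum_congr rfl (fun σ hσ => ?_), Finset.sum_const, nsmul_eq_mul, hset]
    simp only [mem_filter, mem_univ, true_and] at hσ
    rw [← hσ]
  -- m ≥ 2 not needed explicitly; use reference fiber (a,b)
  have habt : (a, b) ∈ t := by
    simp only [ht, mem_filter, mem_product, mem_univ, true_and, and_true]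
    exact hab
  set c := (Finset.univ.filter fun σ : Equiv.Perm (Fin m) => σ a = a ∧ σ b = b).card with hc
  have hcp : ∀ p ∈ t, (Finset.univ.filter fun σ : Equiv.Perm (Fin m) =>
      σ a = p.1 ∧ σ b = p.2).card = c := by
    intro p hp
    simp only [ht, mem_filter, mem_product, mem_univ, true_and, and_true] at hp
    exact card_fiber_const a b p.1 p.2 a b hp hab
  have hfact : Nat.factorial m = c * t.card := by
    have h1 : (Finset.univ : Finset (Equiv.Perm (Fin m))).card
        = ∑ p ∈ t, (Finset.univ.filter fun σ : Equiv.Perm (Fin m) => (σ a, σ b) = p).card :=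
      Finset.card_eq_sum_card_fiberwise hmaps
    have h2 : (Finset.univ : Finset (Equiv.Perm (Fin m))).card = Nat.factorial m := by
      rw [Finset.card_univ, Fintype.card_perm, Fintype.card_fin]
    rw [← h2, h1, Finset.sum_congr rfl (fun p hp => ?_), Finset.sum_const, smul_eq_mul, mul_comm]
    have hset : (Finset.univ.filter (fun σ : Equiv.Perm (Fin m) => (σ a, σ b) = p))
        = Finset.univ.filter (fun σ : Equiv.Perm (Fin m) => σ a = p.1 ∧ σ b = p.2) := by
      apply Finset.filter_congr; intro σ _; simp [Prod.ext_iff]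
    rw [hset, hcp p hp]
  have hcardt : t.card = m * m - m := by
    have : t = Finset.univ.offDiag := by
      ext p; simp [ht, Finset.mem_offDiag]
    rw [this, Finset.offDiag_card]
    simp [Finset.card_univ]
  rw [← hsum, Finset.sum_congr rfl (fun p hp => by rw [hfiber p hp, hcp p hp]),
    ← Finset.mul_sum, hfact, hcardt]
  push_cast
  ring

end ConfAux2





namespace ConfAux3

/-- `cc u v` is the count `N` given ranks `u` (own) and `v` (other test point). -/
def cc (u v : ℕ) : ℕ := u - (if v < u then 1 else 0)

lemma master_pairs (k : ℕ) (F : ℕ → ℕ → ℝ) :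
    ∑ u ∈ range (k+1), ∑ v ∈ range (k+1), (if u ≠ v then F (cc u v) (cc v u) else 0)
      = ∑ b ∈ range k, ∑ a ∈ range (b+1), (F a b + F b a) := by
  have hpt : ∀ u v : ℕ, (if u ≠ v then F (cc u v) (cc v u) else 0)
      = (if u < v then F u (v-1) else 0) + (if v < u then F (u-1) v else 0) := by
    intro u v
    rcases lt_trichotomy u v with h | h | h
    · have h1 : u ≠ v := Nat.ne_of_lt h
      have h2 : ¬ v < u := lt_asymm h
      simp [cc, h, h1, h2]
    · simp [h]
    · have h1 : u ≠ v := (Nat.ne_of_lt h).symm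
      have h2 : ¬ u < v := lt_asymm h
      simp [cc, h, h1, h2]
  have hsplit : ∑ u ∈ range (k+1), ∑ v ∈ range (k+1), (if u ≠ v then F (cc u v) (cc v u) else 0)
      = (∑ u ∈ range (k+1), ∑ v ∈ range (k+1), (if u < v then F u (v-1) else 0))
        + ∑ u ∈ range (k+1), ∑ v ∈ range (k+1), (if v < u then F (u-1) v else 0) := by
    rw [← Finset.sum_add_distrib]
    refine Finset.sum_congr rfl fun u _ => ?_
    rw [← Finset.sum_add_distrib]
    exact Finset.sum_congr rfl fun v _ => hpt u v
  have hA : ∑ u ∈ range (k+1), ∑ v ∈ range (k+1), (if u < v then F u (v-1) else 0)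
      = ∑ b ∈ range k, ∑ a ∈ range (b+1), F a b := by
    rw [Finset.sum_comm]
    have hin : ∀ v ∈ range (k+1), ∑ u ∈ range (k+1), (if u < v then F u (v-1) else 0)
        = ∑ u ∈ range v, F u (v-1) := by
      intro v hv
      rw [← Finset.sum_filter]
      apply Finset.sum_congr _ (fun u _ => rfl)
      ext a
      simp only [Finset.mem_filter, Finset.mem_range] at *
      omega
    rw [Finset.sum_congr rfl hin, Finset.sum_range_succ']
    simp
  have hB : ∑ u ∈ range (k+1), ∑ v ∈ range (k+1), (if v < u then F (u-1) v else 0)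
      = ∑ b ∈ range k, ∑ a ∈ range (b+1), F b a := by
    have hin : ∀ u ∈ range (k+1), ∑ v ∈ range (k+1), (if v < u then F (u-1) v else 0)
        = ∑ v ∈ range u, F (u-1) v := by
      intro u hu
      rw [← Finset.sum_filter]
      apply Finset.sum_congr _ (fun v _ => rfl)
      ext a
      simp only [Finset.mem_filter, Finset.mem_range] at *
      omega
    rw [Finset.sum_congr rfl hin, Finset.sum_range_succ']
    simp
  rw [hsplit, hA, hB, ← Finset.sum_add_distrib]
  exact Finset.sum_congr rfl fun b _ => (Finset.sum_add_distrib).symm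

lemma sum_I1 (k : ℕ) (g : ℕ → ℝ) :
    ∑ b ∈ range k, ∑ a ∈ range (b+1), (g a + g b) = (k+1) * ∑ a ∈ range k, g a := by
  induction k with
  | zero => simp
  | succ k ih =>
    rw [Finset.sum_range_succ, ih, Finset.sum_add_distrib, Finset.sum_const,
      Finset.card_range, nsmul_eq_mul, Finset.sum_range_succ (f := g)]
    push_cast; ring

lemma sum_I2 (k : ℕ) (g : ℕ → ℝ) :
    ∑ b ∈ range k, ∑ a ∈ range (b+1), (g a * g b + g b * g a)
      = (∑ a ∈ range k, g a) * (∑ a ∈ range k, g a) + ∑ a ∈ range k, g a * g a := by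
  induction k with
  | zero => simp
  | succ k ih =>
    rw [Finset.sum_range_succ, ih]
    have hinner : ∑ a ∈ range (k+1), (g a * g k + g k * g a)
        = 2 * (∑ a ∈ range (k+1), g a) * g k := by
      rw [Finset.sum_add_distrib, ← Finset.sum_mul, ← Finset.mul_sum]
      ring
    rw [hinner, Finset.sum_range_succ (f := g),
      Finset.sum_range_succ (f := fun a => g a * g a)]
    ring

lemma strict_cs (k : ℕ) (g : ℕ → ℝ) (a b : ℕ) (ha : a < k) (hb : b < k) (hne : g a ≠ g b) :
    (∑ i ∈ range k, g i) * (∑ i ∈ range k, g i) < k * ∑ i ∈ range k, g i * g i := by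
  have expand : ∑ i ∈ range k, ∑ j ∈ range k, (g i - g j)^2
      = 2*((k : ℝ) * ∑ i ∈ range k, g i * g i)
        - 2*((∑ i ∈ range k, g i) * (∑ i ∈ range k, g i)) := by
    have h1 : ∀ i ∈ range k, ∑ j ∈ range k, (g i - g j)^2
        = (k : ℝ) * (g i * g i) - 2 * g i * (∑ j ∈ range k, g j)
            + ∑ j ∈ range k, g j * g j := by
      intro i _
      have h0 : ∀ j ∈ range k, (g i - g j)^2 = (g i * g i) - 2 * g i * g j + g j * g j := by
        intro j _; ring
      rw [Finset.sum_congr rfl h0, Finset.sum_add_distrib, Finset.sum_sub_distrib,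
        Finset.sum_const, nsmul_eq_mul, Finset.card_range, ← Finset.mul_sum]
    rw [Finset.sum_congr rfl h1, Finset.sum_add_distrib, Finset.sum_sub_distrib,
      Finset.sum_const, nsmul_eq_mul, Finset.card_range, ← Finset.mul_sum]
    have h2 : ∑ x ∈ range k, 2 * g x * (∑ j ∈ range k, g j)
        = 2 * (∑ j ∈ range k, g j) * (∑ j ∈ range k, g j) := by
      rw [← Finset.sum_mul, ← Finset.mul_sum]
    rw [h2]
    ring
  have hpos : (0:ℝ) < ∑ i ∈ range k, ∑ j ∈ range k, (g i - g j)^2 := by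
    rw [← Finset.sum_product']
    apply Finset.sum_pos'
    · intro p _; exact sq_nonneg _
    · refine ⟨(a, b), by simp [ha, hb], ?_⟩
      have h := sub_ne_zero.mpr hne
      positivity
  linarith
end ConfAux3

namespace ConfAux
open Finset
open scoped Classical

lemma count_on_rank {n : ℕ} (x : Fin (n+2) → ℝ) (σ : Equiv.Perm (Fin (n+2)))
    (hσ : ∀ k, rnk x k = σ k) (j j' : Fin 2) (hjj' : j ≠ j') :
    (Finset.univ.filter fun i : Fin n => x (Fin.castAdd 2 i) ≤ x (Fin.natAdd n j)).card
      = ConfAux3.cc (σ (Fin.natAdd n j)) (σ (Fin.natAdd n j')) := by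
  have hinj := inj_of_rnk_perm σ hσ
  have hne : ∀ i : Fin n, x (Fin.castAdd 2 i) ≠ x (Fin.natAdd n j) := by
    intro i hc
    have h1 := hinj hc
    have h2 : (Fin.castAdd 2 i : Fin (n+2)).val = i.val := rfl
    have h3 : (Fin.natAdd n j : Fin (n+2)).val = n + j.val := rfl
    rw [h1, h3] at h2
    have := i.isLt
    omega
  have hfilter : (Finset.univ.filter fun i : Fin n => x (Fin.castAdd 2 i) ≤ x (Fin.natAdd n j))
      = (Finset.univ.filter fun i : Fin n => x (Fin.castAdd 2 i) < x (Fin.natAdd n j)) := by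
    apply Finset.filter_congr
    intro i _
    constructor
    · intro h; exact lt_of_le_of_ne h (hne i)
    · exact le_of_lt
  have hsum2 : ∑ q : Fin 2, (if x (Fin.natAdd n q) < x (Fin.natAdd n j) then (1:ℕ) else 0)
      = if x (Fin.natAdd n j') < x (Fin.natAdd n j) then 1 else 0 := by
    rw [Fin.sum_univ_two]
    fin_cases j <;> fin_cases j' <;> simp_all [lt_irrefl]
  have hrnk : rnk x (Fin.natAdd n j)
      = (Finset.univ.filter fun i : Fin n => x (Fin.castAdd 2 i) < x (Fin.natAdd n j)).card
        + (if x (Fin.natAdd n j') < x (Fin.natAdd n j) then 1 else 0) := by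
    rw [rnk, Finset.card_filter, Fin.sum_univ_add, hsum2, Finset.card_filter]
  have hord : (if x (Fin.natAdd n j') < x (Fin.natAdd n j) then (1:ℕ) else 0)
      = if (σ (Fin.natAdd n j') : ℕ) < (σ (Fin.natAdd n j) : ℕ) then 1 else 0 := by
    congr 1
    apply propext
    rw [← hσ, ← hσ, ← rnk_lt_iff x]
  have hv := hσ (Fin.natAdd n j)
  rw [hfilter, ConfAux3.cc]
  rw [hord] at hrnk
  omega

end ConfAux


/-- **Correlation structure of null marginal conformal p-values.**
If `S 1, …, S n, T 1, T 2` are i.i.d. with a nonatomic law `μ`, `p 1, p 2` are the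
marginal conformal p-values of `T 1, T 2` w.r.t. `S 1, …, S n`, and `G` is any
real-valued function, then `Cov[G (p 1), G (p 2)] = Var[G (p 1)] / (n + 2)`; in
particular, if `G` is not constant on the grid `{1/(n+1), …, 1}`, the correlation
of `G (p 1)` and `G (p 2)` equals `1 / (n + 2)`. -/
theorem stmt0 {Ω : Type*} [MeasurableSpace Ω] (P : Measure Ω) [IsProbabilityMeasure P]
    (n : ℕ) (hn : 1 ≤ n)
    (μ : Measure ℝ) [IsProbabilityMeasure μ] [NullSingletonClass μ]
    (X : Fin (n + 2) → Ω → ℝ)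
    (hmeas : ∀ i, Measurable (X i))
    (hindep : iIndepFun X P)
    (hlaw : ∀ i, Measure.map (X i) P = μ)
    (G : ℝ → ℝ)
    (p : Fin 2 → Ω → ℝ)
    (hp : ∀ j ω, p j ω = confPval (fun i : Fin n => X (Fin.castAdd 2 i)) (X (Fin.natAdd n j)) ω) :
    cov P (fun ω => G (p 0 ω)) (fun ω => G (p 1 ω))
        = variance (fun ω => G (p 0 ω)) P / (n + 2) ∧
      ((∃ j k : Fin (n + 1), G (((j : ℕ) + 1) / (n + 1)) ≠ G (((k : ℕ) + 1) / (n + 1))) →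
        cov P (fun ω => G (p 0 ω)) (fun ω => G (p 1 ω)) /
            (Real.sqrt (variance (fun ω => G (p 0 ω)) P) *
              Real.sqrt (variance (fun ω => G (p 1 ω)) P)) = 1 / (n + 2)) := by
  classical
  set Xv : Ω → (Fin (n+2) → ℝ) := fun ω i => X i ω with hXvdef
  have hXv : Measurable Xv := measurable_pi_lambda _ hmeas
  set ν : Measure (Fin (n+2) → ℝ) := Measure.pi (fun _ => μ) with hνdef
  have hmap : Measure.map Xv P = ν := by
    symm
    apply Measure.pi_eq
    intro s hs
    rw [Measure.map_apply hXv (MeasurableSet.univ_pi hs)]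
    have hpre : Xv ⁻¹' (Set.pi Set.univ s) = ⋂ i, X i ⁻¹' s i := by
      ext ω; simp [Xv, Set.mem_pi]
    have hEq : (⋂ i, X i ⁻¹' s i) = ⋂ i ∈ Finset.univ, X i ⁻¹' s i := by simp
    rw [hpre, hEq, hindep.measure_inter_preimage_eq_mul (S := Finset.univ) (fun i _ => hs i)]
    exact Finset.prod_congr rfl fun i _ => by
      rw [← hlaw i, Measure.map_apply (hmeas i) (hs i)]
  have hcomp_meas : ∀ e : Equiv.Perm (Fin (n+2)),
      Measurable (fun x : Fin (n+2) → ℝ => x ∘ e) :=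
    fun e => measurable_pi_lambda _ (fun j => measurable_pi_apply (e j))
  have hperm : ∀ e : Equiv.Perm (Fin (n+2)),
      Measure.map (fun x : Fin (n+2) → ℝ => x ∘ e) ν = ν := by
    intro e
    symm
    apply Measure.pi_eq
    intro s hs
    rw [Measure.map_apply (hcomp_meas e) (MeasurableSet.univ_pi hs)]
    have hpre : (fun x : Fin (n+2) → ℝ => x ∘ e) ⁻¹' (Set.pi Set.univ s)
        = Set.pi Set.univ (fun i => s (e.symm i)) := by
      ext x
      simp only [Set.mem_preimage, Set.mem_pi, Set.mem_univ, true_implies, Function.comp]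
      constructor
      · intro h i; have := h (e.symm i); rwa [Equiv.apply_symm_apply] at this
      · intro h i; have := h (e i); rwa [Equiv.symm_apply_apply] at this
    rw [hpre, Measure.pi_pi]
    exact Equiv.prod_comp e.symm (fun i => μ (s i))
  -- ties are null
  have htie : ∀ i j : Fin (n+2), i ≠ j → P {ω | X i ω = X j ω} = 0 := by
    intro i j hij
    have hIf : IndepFun (X i) (X j) P := hindep.indepFun hij
    have hmm := (ProbabilityTheory.indepFun_iff_map_prod_eq_prod_map_map
      (hmeas i).aemeasurable (hmeas j).aemeasurable).mp hIf
    have hdiag : MeasurableSet {q : ℝ × ℝ | q.1 = q.2} :=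
      measurableSet_eq_fun measurable_fst measurable_snd
    have hpair : Measurable (fun ω => (X i ω, X j ω)) := (hmeas i).prodMk (hmeas j)
    have h1 : {ω | X i ω = X j ω} = (fun ω => (X i ω, X j ω)) ⁻¹' {q | q.1 = q.2} := rfl
    rw [h1, ← Measure.map_apply hpair hdiag, hmm, hlaw, hlaw, Measure.prod_apply hdiag]
    have h2 : ∀ a : ℝ, μ (Prod.mk a ⁻¹' {q : ℝ × ℝ | q.1 = q.2}) = 0 := by
      intro a
      have : (Prod.mk a ⁻¹' {q : ℝ × ℝ | q.1 = q.2}) = {a} := by ext b; simp [eq_comm]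
      rw [this]; exact measure_singleton a
    simp [h2]
  set badA : Set (Fin (n+2) → ℝ) := ⋃ i, ⋃ j, {x | i ≠ j ∧ x i = x j} with hbadAdef
  have hbadA_meas : MeasurableSet badA := by
    apply MeasurableSet.iUnion; intro i; apply MeasurableSet.iUnion; intro j
    by_cases hij : i = j
    · have : {x : Fin (n+2) → ℝ | i ≠ j ∧ x i = x j} = ∅ := by ext x; simp [hij]
      rw [this]; exact MeasurableSet.empty
    · have : {x : Fin (n+2) → ℝ | i ≠ j ∧ x i = x j} = {x | x i = x j} := by ext x; simp [hij]
      rw [this]; exact measurableSet_eq_fun (measurable_pi_apply i) (measurable_pi_apply j)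
  have hbadA_eq : badA = {x : Fin (n+2) → ℝ | ¬ Function.Injective x} := by
    ext x
    simp only [hbadAdef, Set.mem_iUnion, Set.mem_setOf_eq, Function.Injective]
    push_neg
    constructor
    · rintro ⟨i, j, hij, hx⟩; exact ⟨i, j, hx, hij⟩
    · rintro ⟨i, j, hx, hij⟩; exact ⟨i, j, hij, hx⟩
  have hPbad : P (Xv ⁻¹' badA) = 0 := by
    have hpreU : Xv ⁻¹' badA = ⋃ i, ⋃ j, Xv ⁻¹' {x : Fin (n+2) → ℝ | i ≠ j ∧ x i = x j} := by
      simp [hbadAdef, Set.preimage_iUnion]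
    rw [hpreU]
    apply measure_iUnion_null; intro i
    apply measure_iUnion_null; intro j
    by_cases hij : i = j
    · have : Xv ⁻¹' {x : Fin (n+2) → ℝ | i ≠ j ∧ x i = x j} = ∅ := by ext ω; simp [hij]
      rw [this]; exact measure_empty
    · exact measure_mono_null (fun ω h => h.2) (htie i j hij)
  have hbad0 : ν badA = 0 := by
    rw [← hmap, Measure.map_apply hXv hbadA_meas]
    exact hPbad
  -- rank events
  set A : Equiv.Perm (Fin (n+2)) → Set (Fin (n+2) → ℝ) :=
    fun σ => {x | ∀ k, ConfAux.rnk x k = σ k} with hAdef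
  have hA_meas : ∀ σ, MeasurableSet (A σ) := by
    intro σ
    have : A σ = ⋂ k, (fun x => ConfAux.rnk x k) ⁻¹' {((σ k : Fin (n+2)) : ℕ)} := by
      ext x; simp [hAdef, Set.mem_iInter]
    rw [this]
    exact MeasurableSet.iInter fun k => (ConfAux.measurable_rnk k) (measurableSet_singleton _)
  have hA_inv : ∀ σ τ : Equiv.Perm (Fin (n+2)), ν (A σ) = ν (A τ) := by
    intro σ τ
    set e : Equiv.Perm (Fin (n+2)) := σ.trans τ.symm with hedef
    have hesymm : ∀ k, σ (e.symm k) = τ k := by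
      intro k; simp [hedef]
    have hpre : (fun x : Fin (n+2) → ℝ => x ∘ e) ⁻¹' (A σ) = A τ := by
      ext x
      simp only [Set.mem_preimage, hAdef, Set.mem_setOf_eq]
      constructor
      · intro h k
        have h2 := h (e.symm k)
        rw [ConfAux.rnk_comp, Equiv.apply_symm_apply] at h2
        rw [h2, hesymm k]
      · intro h k
        rw [ConfAux.rnk_comp, h (e k)]
        simp [hedef]
    calc ν (A σ) = (Measure.map (fun x => x ∘ e) ν) (A σ) := by rw [hperm e]
      _ = ν ((fun x : Fin (n+2) → ℝ => x ∘ e) ⁻¹' A σ) :=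
          Measure.map_apply (hcomp_meas e) (hA_meas σ)
      _ = ν (A τ) := by rw [hpre]
  have hA_union : (⋃ σ : Equiv.Perm (Fin (n+2)), A σ) = {x | Function.Injective x} := by
    ext x
    simp only [Set.mem_iUnion, Set.mem_setOf_eq, hAdef]
    constructor
    · rintro ⟨σ, hσ⟩; exact ConfAux.inj_of_rnk_perm σ hσ
    · intro h; exact ConfAux.exists_perm_of_inj h
  have hA_disj : (Set.univ : Set (Equiv.Perm (Fin (n+2)))).PairwiseDisjoint A := by
    intro σ _ τ _ hστ
    refine Set.disjoint_left.mpr ?_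
    intro x hxσ hxτ
    apply hστ
    apply Equiv.ext
    intro k
    apply Fin.ext
    rw [← hxσ k, ← hxτ k]
  have hinj1 : ν {x : Fin (n+2) → ℝ | Function.Injective x} = 1 := by
    have hset : {x : Fin (n+2) → ℝ | Function.Injective x} = badAᶜ := by
      rw [hbadA_eq]; ext x; simp
    rw [hset, measure_compl hbadA_meas (measure_ne_top _ _), hbad0, measure_univ]
    simp
  have hsum1 : ∑ τ : Equiv.Perm (Fin (n+2)), ν (A τ) = 1 := by
    rw [← measure_biUnion_finset (by simpa using hA_disj) (fun τ _ => hA_meas τ)]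
    have : (⋃ τ ∈ (Finset.univ : Finset (Equiv.Perm (Fin (n+2)))), A τ)
        = ⋃ τ : Equiv.Perm (Fin (n+2)), A τ := by simp
    rw [this, hA_union, hinj1]
  have hAσ_val : ∀ σ : Equiv.Perm (Fin (n+2)),
      ((Nat.factorial (n+2) : ℝ≥0∞)) * ν (A σ) = 1 := by
    intro σ
    have hconst : ∑ τ : Equiv.Perm (Fin (n+2)), ν (A τ)
        = (Fintype.card (Equiv.Perm (Fin (n+2)))) * ν (A σ) := by
      rw [Finset.sum_congr rfl (fun τ _ => hA_inv τ σ), Finset.sum_const, Finset.card_univ,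
        nsmul_eq_mul]
    calc ((Nat.factorial (n+2) : ℝ≥0∞)) * ν (A σ)
        = (Fintype.card (Equiv.Perm (Fin (n+2)))) * ν (A σ) := by
          rw [Fintype.card_perm, Fintype.card_fin]
      _ = ∑ τ : Equiv.Perm (Fin (n+2)), ν (A τ) := hconst.symm
      _ = 1 := hsum1
  set q : ℝ := (ν (A 1)).toReal with hqdef
  have hq : (Nat.factorial (n+2) : ℝ) * q = 1 := by
    have h1 := hAσ_val 1
    have h2 := congrArg ENNReal.toReal h1
    rw [ENNReal.toReal_mul] at h2
    simpa using h2
  have hqσ : ∀ σ : Equiv.Perm (Fin (n+2)), (P (Xv ⁻¹' A σ)).toReal = q := by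
    intro σ
    rw [← Measure.map_apply hXv (hA_meas σ), hmap, hA_inv σ 1]
  -- counts and grid function
  set N : Fin 2 → Ω → ℕ := fun j ω =>
    (Finset.univ.filter fun i : Fin n => X (Fin.castAdd 2 i) ω ≤ X (Fin.natAdd n j) ω).card
    with hNdef
  set g : ℕ → ℝ := fun a => G ((1 + (a:ℝ)) / ((n:ℝ) + 1)) with hgdef
  have hfg : ∀ (j : Fin 2) (ω : Ω), G (p j ω) = g (N j ω) := by
    intro j ω
    rw [hp j ω]
    rfl
  have hNmeas : ∀ j, Measurable (N j) := by
    intro j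
    have : N j = fun ω => ∑ i : Fin n,
        if X (Fin.castAdd 2 i) ω ≤ X (Fin.natAdd n j) ω then 1 else 0 := by
      funext ω; simp only [hNdef]; rw [Finset.card_filter]
    rw [this]
    apply Finset.measurable_sum
    intro i _
    exact Measurable.ite (measurableSet_le (hmeas _) (hmeas _)) measurable_const measurable_const
  set t0 : Fin (n+2) := Fin.natAdd n 0 with ht0
  set t1 : Fin (n+2) := Fin.natAdd n 1 with ht1
  have ht01 : t0 ≠ t1 := by
    intro h
    have := congrArg Fin.val h
    simp [ht0, ht1, Fin.natAdd] at this
  -- the key expectation formula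
  have key : ∀ F : ℕ → ℕ → ℝ, ∫ ω, F (N 0 ω) (N 1 ω) ∂P
      = (∑ b ∈ Finset.range (n+1), ∑ a ∈ Finset.range (b+1), (F a b + F b a))
          / (((n:ℝ)+1) * ((n:ℝ)+2)) := by
    intro F
    set c : Equiv.Perm (Fin (n+2)) → ℝ :=
      fun σ => F (ConfAux3.cc (σ t0) (σ t1)) (ConfAux3.cc (σ t1) (σ t0)) with hcdef
    set hsf : Ω → ℝ := fun ω => ∑ σ : Equiv.Perm (Fin (n+2)),
      Set.indicator (Xv ⁻¹' A σ) (fun _ => c σ) ω with hhsdef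
    have hae : (fun ω => F (N 0 ω) (N 1 ω)) =ᵐ[P] hsf := by
      rw [Filter.EventuallyEq, MeasureTheory.ae_iff]
      apply measure_mono_null _ hPbad
      intro ω hω
      simp only [Set.mem_setOf_eq] at hω
      by_contra hcon
      apply hω
      -- ω ∉ Xv ⁻¹' badA, so Xv ω is injective
      have hinj : Function.Injective (Xv ω) := by
        by_contra hni
        exact hcon (by rw [Set.mem_preimage, hbadA_eq]; exact hni)
      obtain ⟨σ, hσ⟩ := ConfAux.exists_perm_of_inj hinj
      have hmem : ω ∈ Xv ⁻¹' A σ := by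
        rw [Set.mem_preimage]; exact hσ
      have hsingle : hsf ω = c σ := by
        show (∑ τ : Equiv.Perm (Fin (n+2)), Set.indicator (Xv ⁻¹' A τ) (fun _ => c τ) ω) = c σ
        rw [Finset.sum_eq_single σ]
        · rw [Set.indicator_of_mem hmem]
        · intro τ _ hτσ
          apply Set.indicator_of_notMem
          rw [Set.mem_preimage]
          intro hmem'
          apply hτσ
          apply Equiv.ext
          intro k
          apply Fin.ext
          rw [← hmem' k, ← hσ k]
        · intro habs; exact absurd (Finset.mem_univ σ) habs
      rw [hsingle, hcdef]
      have h0 : N 0 ω = ConfAux3.cc (σ t0) (σ t1) :=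
        ConfAux.count_on_rank (Xv ω) σ hσ 0 1 (by decide)
      have h1 : N 1 ω = ConfAux3.cc (σ t1) (σ t0) :=
        ConfAux.count_on_rank (Xv ω) σ hσ 1 0 (by decide)
      rw [h0, h1]
    rw [integral_congr_ae hae, hhsdef]
    rw [integral_finset_sum _ (fun σ _ => ((integrable_const (c σ)).indicator (hXv (hA_meas σ))))]
    have hint : ∀ σ : Equiv.Perm (Fin (n+2)),
        ∫ ω, Set.indicator (Xv ⁻¹' A σ) (fun _ => c σ) ω ∂P = q * c σ := by
      intro σ
      rw [MeasureTheory.integral_indicator_const (c σ) (hXv (hA_meas σ)), measureReal_def, hqσ σ, smul_eq_mul]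
    rw [Finset.sum_congr rfl (fun σ _ => hint σ), ← Finset.mul_sum]
    -- convert the offdiag sum into nested ℕ sums
    have hoff : ∑ pr ∈ (Finset.univ ×ˢ Finset.univ).filter
          (fun pr : Fin (n+2) × Fin (n+2) => pr.1 ≠ pr.2),
          F (ConfAux3.cc pr.1 pr.2) (ConfAux3.cc pr.2 pr.1)
        = ∑ b ∈ Finset.range (n+1), ∑ a ∈ Finset.range (b+1), (F a b + F b a) := by
      rw [Finset.sum_filter, Finset.sum_product]
      have hcast : ∀ u v : Fin (n+2),
          (if u ≠ v then F (ConfAux3.cc u v) (ConfAux3.cc v u) else 0)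
            = (if (u:ℕ) ≠ (v:ℕ) then F (ConfAux3.cc u v) (ConfAux3.cc v u) else 0) := by
        intro u v
        by_cases h : u = v
        · simp [h]
        · have hv : (u : ℕ) ≠ (v : ℕ) := fun hc => h (Fin.ext hc)
          simp [h, hv]
      have hinner : ∀ u : Fin (n+2),
          (∑ v : Fin (n+2), if u ≠ v then F (ConfAux3.cc u v) (ConfAux3.cc v u) else 0)
          = ∑ v ∈ Finset.range (n+2),
              (if (u:ℕ) ≠ v then F (ConfAux3.cc u v) (ConfAux3.cc v u) else 0) := by
        intro u
        rw [← Fin.sum_univ_eq_sum_range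
          (fun v => if (u:ℕ) ≠ v then F (ConfAux3.cc (u:ℕ) v) (ConfAux3.cc v (u:ℕ)) else 0) (n+2)]
        exact Finset.sum_congr rfl fun v _ => hcast u v
      rw [Finset.sum_congr rfl (fun u _ => hinner u), Fin.sum_univ_eq_sum_range
        (fun u => ∑ v ∈ Finset.range (n+2),
          if u ≠ v then F (ConfAux3.cc u v) (ConfAux3.cc v u) else 0) (n+2)]
      exact ConfAux3.master_pairs (n+1) F
    set T : ℝ := ∑ b ∈ Finset.range (n+1), ∑ a ∈ Finset.range (b+1), (F a b + F b a) with hTdef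
    set Sσ : ℝ := ∑ σ : Equiv.Perm (Fin (n+2)), c σ with hSσdef
    have hgroup : (((n+2) * (n+2) - (n+2) : ℕ) : ℝ) * Sσ = (Nat.factorial (n+2) : ℝ) * T := by
      have h := ConfAux2.sum_perm_group t0 t1 ht01
        (fun u v : Fin (n+2) => F (ConfAux3.cc u v) (ConfAux3.cc v u))
      rw [hoff] at h
      exact h
    have hcast2 : (((n+2) * (n+2) - (n+2) : ℕ) : ℝ) = ((n:ℝ)+1) * ((n:ℝ)+2) := by
      have : (n+2) * (n+2) - (n+2) = (n+1) * (n+2) := by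
        have h' : (n+2) * (n+2) = (n+1) * (n+2) + (n+2) := by ring
        omega
      rw [this]; push_cast; ring
    rw [hcast2] at hgroup
    -- q * Sσ = T / ((n+1)(n+2))
    have hfac_pos : (0:ℝ) < (Nat.factorial (n+2) : ℝ) := by
      exact_mod_cast Nat.factorial_pos (n+2)
    have hd_pos : (0:ℝ) < ((n:ℝ)+1) * ((n:ℝ)+2) := by positivity
    field_simp
    linear_combination q * hgroup + T * hq
  -- rewrite goal in terms of g and N
  simp only [hfg]
  set D : ℝ := ((n:ℝ)+1) * ((n:ℝ)+2) with hDdef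
  have hD : D ≠ 0 := by positivity
  set S : ℝ := ∑ a ∈ Finset.range (n+1), g a with hSdef
  set Q : ℝ := ∑ a ∈ Finset.range (n+1), g a * g a with hQdef
  have hN_lt : ∀ (j : Fin 2) (ω : Ω), N j ω < n + 1 := by
    intro j ω
    have h1 : N j ω ≤ (Finset.univ : Finset (Fin n)).card := Finset.card_filter_le _ _
    rw [Finset.card_univ, Fintype.card_fin] at h1
    omega
  -- integrability of functions of (N 0, N 1)
  have hFmeas : ∀ F : ℕ → ℕ → ℝ, Measurable (fun ω => F (N 0 ω) (N 1 ω)) := by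
    intro F
    exact (measurable_of_countable (fun q : ℕ × ℕ => F q.1 q.2)).comp
      ((hNmeas 0).prodMk (hNmeas 1))
  have hFbound : ∀ (F : ℕ → ℕ → ℝ) (ω : Ω), ‖F (N 0 ω) (N 1 ω)‖
      ≤ ∑ a ∈ Finset.range (n+1), ∑ b ∈ Finset.range (n+1), ‖F a b‖ := by
    intro F ω
    have hmem0 : N 0 ω ∈ Finset.range (n+1) := Finset.mem_range.mpr (hN_lt 0 ω)
    have hmem1 : N 1 ω ∈ Finset.range (n+1) := Finset.mem_range.mpr (hN_lt 1 ω)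
    calc ‖F (N 0 ω) (N 1 ω)‖
        ≤ ∑ b ∈ Finset.range (n+1), ‖F (N 0 ω) b‖ :=
          Finset.single_le_sum (fun b _ => norm_nonneg _) hmem1
      _ ≤ ∑ a ∈ Finset.range (n+1), ∑ b ∈ Finset.range (n+1), ‖F a b‖ :=
          Finset.single_le_sum
            (fun a _ => Finset.sum_nonneg fun b _ => norm_nonneg _) hmem0
  have hFint : ∀ F : ℕ → ℕ → ℝ, Integrable (fun ω => F (N 0 ω) (N 1 ω)) P := by
    intro F
    exact Integrable.mono' (integrable_const _) (hFmeas F).aestronglyMeasurable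
      (Filter.Eventually.of_forall (hFbound F))
  -- the five moments
  set I0 : ℝ := ∫ ω, g (N 0 ω) ∂P with hI0def
  set I1 : ℝ := ∫ ω, g (N 1 ω) ∂P with hI1def
  set I00 : ℝ := ∫ ω, g (N 0 ω) * g (N 0 ω) ∂P with hI00def
  set I11 : ℝ := ∫ ω, g (N 1 ω) * g (N 1 ω) ∂P with hI11def
  set I01 : ℝ := ∫ ω, g (N 0 ω) * g (N 1 ω) ∂P with hI01def
  have hcomm : ∀ gg : ℕ → ℝ, (∑ b ∈ Finset.range (n+1), ∑ a ∈ Finset.range (b+1), (gg b + gg a))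
      = ∑ b ∈ Finset.range (n+1), ∑ a ∈ Finset.range (b+1), (gg a + gg b) :=
    fun gg => Finset.sum_congr rfl fun b _ => Finset.sum_congr rfl fun a _ => add_comm _ _
  have hI0 : I0 = (((n:ℝ)+1) + 1) * S / D := by
    have h := key (fun a _ => g a)
    beta_reduce at h
    rw [ConfAux3.sum_I1 (n+1) g] at h
    rw [hI0def, h]
    push_cast
    rfl
  have hI1 : I1 = (((n:ℝ)+1) + 1) * S / D := by
    have h := key (fun _ b => g b)
    beta_reduce at h
    rw [hcomm g, ConfAux3.sum_I1 (n+1) g] at h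
    rw [hI1def, h]
    push_cast
    rfl
  have hI00 : I00 = (((n:ℝ)+1) + 1) * Q / D := by
    have h := key (fun a _ => g a * g a)
    beta_reduce at h
    rw [ConfAux3.sum_I1 (n+1) (fun a => g a * g a)] at h
    rw [hI00def, h]
    push_cast
    rfl
  have hI11 : I11 = (((n:ℝ)+1) + 1) * Q / D := by
    have h := key (fun _ b => g b * g b)
    beta_reduce at h
    rw [hcomm (fun a => g a * g a), ConfAux3.sum_I1 (n+1) (fun a => g a * g a)] at h
    rw [hI11def, h]
    push_cast
    rfl
  have hI01 : I01 = (S * S + Q) / D := by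
    have h := key (fun a b => g a * g b)
    beta_reduce at h
    rw [ConfAux3.sum_I2 (n+1) g] at h
    rw [hI01def, h]
  -- covariance identity
  have hcovE : cov P (fun ω => g (N 0 ω)) (fun ω => g (N 1 ω)) = I01 - I0 * I1 := by
    unfold cov
    rw [← hI0def, ← hI1def]
    have hrw : (fun ω => (g (N 0 ω) - I0) * (g (N 1 ω) - I1))
        = fun ω => g (N 0 ω) * g (N 1 ω) - I1 * g (N 0 ω) - I0 * g (N 1 ω) + I0 * I1 :=
      funext fun ω => by ring
    rw [hrw]
    have intA : Integrable
        (fun ω => g (N 0 ω) * g (N 1 ω) - I1 * g (N 0 ω) - I0 * g (N 1 ω)) P :=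
      hFint (fun a b => g a * g b - I1 * g a - I0 * g b)
    have intB : Integrable (fun ω => g (N 0 ω) * g (N 1 ω) - I1 * g (N 0 ω)) P :=
      hFint (fun a b => g a * g b - I1 * g a)
    have int01 : Integrable (fun ω => g (N 0 ω) * g (N 1 ω)) P := hFint (fun a b => g a * g b)
    have intC : Integrable (fun ω => I1 * g (N 0 ω)) P := hFint (fun a _ => I1 * g a)
    have intD : Integrable (fun ω => I0 * g (N 1 ω)) P := hFint (fun _ b => I0 * g b)
    rw [integral_add intA (integrable_const _),
      integral_sub intB intD,
      integral_sub int01 intC,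
      integral_const_mul, integral_const_mul, integral_const]
    simp only [probReal_univ, one_smul]
    rw [← hI0def, ← hI1def, ← hI01def]
    ring
  -- variance identities
  have hmem2 : ∀ (j : Fin 2), MeasureTheory.MemLp (fun ω => g (N j ω)) 2 P := by
    intro j
    refine MeasureTheory.MemLp.of_bound
      (((measurable_of_countable g).comp (hNmeas j)).aestronglyMeasurable)
      (∑ a ∈ Finset.range (n+1), ‖g a‖) ?_
    apply Filter.Eventually.of_forall
    intro ω
    exact Finset.single_le_sum (fun a _ => norm_nonneg _)
      (Finset.mem_range.mpr (hN_lt j ω))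
  have hvar : ∀ (j : Fin 2), variance (fun ω => g (N j ω)) P
      = (∫ ω, g (N j ω) * g (N j ω) ∂P) - (∫ ω, g (N j ω) ∂P) ^ 2 := by
    intro j
    rw [ProbabilityTheory.variance_eq_sub (hmem2 j)]
    congr 1
    apply integral_congr_ae
    apply Filter.Eventually.of_forall
    intro ω
    simp [pow_two]
  have hvar0 : variance (fun ω => g (N 0 ω)) P = I00 - I0 ^ 2 := by rw [hvar 0]
  have hvar1 : variance (fun ω => g (N 1 ω)) P = I11 - I1 ^ 2 := by rw [hvar 1]
  -- main equation
  have hmain : cov P (fun ω => g (N 0 ω)) (fun ω => g (N 1 ω))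
      = variance (fun ω => g (N 0 ω)) P / ((n:ℝ) + 2) := by
    rw [hcovE, hvar0, hI01, hI0, hI1, hI00]
    field_simp
    ring
  constructor
  · exact_mod_cast hmain
  · rintro ⟨j, k, hjk⟩
    have hgj : ∀ (j : Fin (n+1)), G ((((j:ℕ):ℝ) + 1) / ((n:ℝ) + 1)) = g (j:ℕ) := by
      intro i
      have harg : ((((i:ℕ):ℝ)) + 1) / ((n:ℝ)+1) = (1 + (((i:ℕ):ℝ))) / ((n:ℝ)+1) := by ring
      rw [harg, hgdef]
    have hne' : g (j:ℕ) ≠ g (k:ℕ) := by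
      rw [← hgj j, ← hgj k]
      exact_mod_cast hjk
    have hQS : S * S < ((n:ℝ)+1) * Q := by
      have h := ConfAux3.strict_cs (n+1) g (j:ℕ) (k:ℕ) j.isLt k.isLt hne'
      rw [hSdef, hQdef]
      exact_mod_cast h
    have hvar0' : variance (fun ω => g (N 0 ω)) P
        = (((n:ℝ)+1) * Q - S * S) / (((n:ℝ)+1)^2) := by
      rw [hvar0, hI00, hI0, hDdef]
      field_simp
      ring
    have hpos : 0 < variance (fun ω => g (N 0 ω)) P := by
      rw [hvar0']
      apply div_pos
      · linarith [hQS]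
      · positivity
    have hvar_eq : variance (fun ω => g (N 1 ω)) P = variance (fun ω => g (N 0 ω)) P := by
      rw [hvar0, hvar1, hI00, hI11, hI0, hI1]
    have hsq : Real.sqrt (variance (fun ω => g (N 1 ω)) P) =
        Real.sqrt (variance (fun ω => g (N 0 ω)) P) := by rw [hvar_eq]
    rw [hsq, Real.mul_self_sqrt (le_of_lt hpos), hmain]
    have hne0 : variance (fun ω => g (N 0 ω)) P ≠ 0 := ne_of_gt hpos
    have h2 : ((n:ℝ) + 2) ≠ 0 := by positivity
    field_simp
end

section
/- Let n, m ≥ 1, let μ be a Borel probability measure on ℝ with no atoms, and let S_1, …, S_n be i.i.d. with law μ. Let T_1, …, T_m be mutually independent random variables, independent of (S_1, …, S_n), and let I ⊆ {1,…,m} be a set of indices such that T_i has law μ for every i ∈ I. Let p_j be the marginal conformal p-value of T_j with respect to S_1, …, S_n, for j = 1, …, m. Then the random vector (p_1, …, p_m) is PRDS on I: for every i ∈ I, every increasing Borel set A ⊆ ℝ^m, and every pair of grid values x ≤ x′ in {1/(n+1), 2/(n+1), …, 1}, one has ℙ[(p_1,…,p_m) ∈ A | p_i = x] ≤ ℙ[(p_1,…,p_m)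 ∈ A | p_i = x′] (these conditional probabilities are well defined since ℙ[p_i = x] = 1/(n+1) > 0 for each grid value x and each i ∈ I). -/
open MeasureTheory ProbabilityTheory
open scoped Classical ENNReal

namespace Stmt5Helper

variable {n m : ℕ}

noncomputable def cntk (k : Fin m) (w : (Fin n ⊕ Fin m) → ℝ) : ℕ :=
  (Finset.univ.filter fun l : Fin n => w (Sum.inl l) ≤ w (Sum.inr k)).card

noncomputable def qv (w : (Fin n ⊕ Fin m) → ℝ) : Fin m → ℝ :=
  fun k => ((1 : ℝ) + cntk k w) / (n + 1)

def DSet (n : ℕ) (i : Fin m) : Set ((Fin n ⊕ Fin m) → ℝ) :=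
  {w | (∀ l l' : Fin n, l ≠ l' → w (Sum.inl l) ≠ w (Sum.inl l')) ∧
    ∀ l : Fin n, w (Sum.inl l) ≠ w (Sum.inr i)}

def sw (l : Fin n) (i : Fin m) (w : (Fin n ⊕ Fin m) → ℝ) : (Fin n ⊕ Fin m) → ℝ :=
  fun c => w (Equiv.swap (Sum.inl l) (Sum.inr i) c)

def isSucc (i : Fin m) (w : (Fin n ⊕ Fin m) → ℝ) (l : Fin n) : Prop :=
  w (Sum.inr i) < w (Sum.inl l) ∧
    ∀ l', w (Sum.inr i) < w (Sum.inl l') → w (Sum.inl l) ≤ w (Sum.inl l')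

def isPred (i : Fin m) (w : (Fin n ⊕ Fin m) → ℝ) (l : Fin n) : Prop :=
  w (Sum.inl l) ≤ w (Sum.inr i) ∧
    ∀ l', w (Sum.inl l') ≤ w (Sum.inr i) → w (Sum.inl l') ≤ w (Sum.inl l)

@[simp] lemma sw_inl_self (l : Fin n) (i : Fin m) (w : (Fin n ⊕ Fin m) → ℝ) :
    sw l i w (Sum.inl l) = w (Sum.inr i) := by simp [sw]

@[simp] lemma sw_inr_self (l : Fin n) (i : Fin m) (w : (Fin n ⊕ Fin m) → ℝ) :
    sw l i w (Sum.inr i) = w (Sum.inl l) := by simp [sw]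

lemma sw_inl_ne (l : Fin n) (i : Fin m) (w : (Fin n ⊕ Fin m) → ℝ) {l' : Fin n} (h : l' ≠ l) :
    sw l i w (Sum.inl l') = w (Sum.inl l') := by
  simp [sw, Equiv.swap_apply_of_ne_of_ne, h]

lemma sw_inr_ne (l : Fin n) (i : Fin m) (w : (Fin n ⊕ Fin m) → ℝ) {k : Fin m} (h : k ≠ i) :
    sw l i w (Sum.inr k) = w (Sum.inr k) := by
  simp [sw, Equiv.swap_apply_of_ne_of_ne, h]

@[simp] lemma sw_sw (l : Fin n) (i : Fin m) (w : (Fin n ⊕ Fin m) → ℝ) :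
    sw l i (sw l i w) = w := by
  funext c; simp [sw, Equiv.swap_apply_self]

/-- swap preserves distinctness -/
lemma sw_mem_DSet {i : Fin m} {w : (Fin n ⊕ Fin m) → ℝ} (hD : w ∈ DSet n i) (l : Fin n) :
    sw l i w ∈ DSet n i := by
  obtain ⟨h1, h2⟩ := hD
  constructor
  · intro l1 l2 hne
    by_cases hl1 : l1 = l <;> by_cases hl2 : l2 = l
    · exact absurd (hl1.trans hl2.symm) hne
    · subst hl1; rw [sw_inl_self, sw_inl_ne _ _ _ hl2]; exact fun h => h2 l2 h.symm
    · subst hl2; rw [sw_inl_self, sw_inl_ne _ _ _ hl1]; exact h2 l1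
    · rw [sw_inl_ne _ _ _ hl1, sw_inl_ne _ _ _ hl2]; exact h1 l1 l2 hne
  · intro l1
    by_cases hl1 : l1 = l
    · subst hl1; rw [sw_inl_self, sw_inr_self]; exact fun h => h2 l1 h.symm
    · rw [sw_inl_ne _ _ _ hl1, sw_inr_self]; exact h1 l1 l hl1

/-- From a "successor" configuration, swapping gives a "predecessor" configuration with
count one larger. -/
lemma bwd {i : Fin m} {w : (Fin n ⊕ Fin m) → ℝ} {l : Fin n}
    (hD : w ∈ DSet n i) (hl : isSucc i w l) :
    sw l i w ∈ DSet n i ∧ cntk i (sw l i w) = cntk i w + 1 ∧ isPred i (sw l i w) l := by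
  obtain ⟨hlt, hmin⟩ := hl
  refine ⟨sw_mem_DSet hD l, ?_, ?_⟩
  · have hfil : (Finset.univ.filter fun l' : Fin n =>
        sw l i w (Sum.inl l') ≤ sw l i w (Sum.inr i))
        = insert l (Finset.univ.filter fun l' : Fin n =>
            w (Sum.inl l') ≤ w (Sum.inr i)) := by
      ext l'
      simp only [Finset.mem_filter, Finset.mem_insert, Finset.mem_univ, true_and]
      rcases eq_or_ne l' l with rfl | hne
      · simp only [sw_inl_self, sw_inr_self]
        simp [hlt.le]
      · rw [sw_inl_ne _ _ _ hne, sw_inr_self]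
        constructor
        · intro h
          refine Or.inr ?_
          by_contra hc
          have h2 := hmin l' (lt_of_not_ge hc)
          exact (hD.1 l' l hne) (le_antisymm h h2)
        · rintro (rfl | h)
          · exact absurd rfl hne
          · exact le_of_lt (lt_of_le_of_lt h hlt)
    rw [cntk, hfil, Finset.card_insert_of_notMem, cntk]
    simp only [Finset.mem_filter, Finset.mem_univ, true_and, not_le]
    exact hlt
  · constructor
    · rw [sw_inl_self, sw_inr_self]; exact le_of_lt hlt
    · intro l'
      rcases eq_or_ne l' l with rfl | hne
      · exact fun _ => le_refl _
      · rw [sw_inl_ne _ _ _ hne, sw_inr_self, sw_inl_self]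
        intro h
        by_contra hc
        have h2 := hmin l' (lt_of_not_ge hc)
        exact (hD.1 l' l hne) (le_antisymm h h2)

/-- From a "predecessor" configuration, swapping gives a "successor" configuration with
count one smaller. -/
lemma fwd {i : Fin m} {w : (Fin n ⊕ Fin m) → ℝ} {l : Fin n}
    (hD : w ∈ DSet n i) (hl : isPred i w l) :
    sw l i w ∈ DSet n i ∧ cntk i (sw l i w) + 1 = cntk i w ∧ isSucc i (sw l i w) l := by
  obtain ⟨hle, hmax⟩ := hl
  have hlt : w (Sum.inl l) < w (Sum.inr i) := lt_of_le_of_ne hle (hD.2 l)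
  refine ⟨sw_mem_DSet hD l, ?_, ?_⟩
  · have hfil : (Finset.univ.filter fun l' : Fin n =>
        sw l i w (Sum.inl l') ≤ sw l i w (Sum.inr i))
        = (Finset.univ.filter fun l' : Fin n =>
            w (Sum.inl l') ≤ w (Sum.inr i)).erase l := by
      ext l'
      simp only [Finset.mem_filter, Finset.mem_erase, Finset.mem_univ, true_and]
      rcases eq_or_ne l' l with rfl | hne
      · simp only [sw_inl_self, sw_inr_self, not_le.mpr hlt, ne_eq, not_true_eq_false,
          false_and, iff_false]
      · rw [sw_inl_ne _ _ _ hne, sw_inr_self]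
        constructor
        · intro h; exact ⟨hne, le_trans h hle⟩
        · intro ⟨_, h⟩; exact hmax l' h
    rw [cntk, hfil, cntk, Finset.card_erase_add_one]
    simp only [Finset.mem_filter, Finset.mem_univ, true_and]
    exact hle
  · constructor
    · rw [sw_inl_self, sw_inr_self]; exact hlt
    · intro l'
      rcases eq_or_ne l' l with rfl | hne
      · exact fun _ => le_refl _
      · rw [sw_inl_ne _ _ _ hne, sw_inr_self, sw_inl_self]
        intro h
        by_contra hc
        have := hmax l' (le_of_lt (lt_of_not_ge hc))
        exact absurd h (not_lt.mpr this)

/-- On a successor configuration, swapping increases all the p-values. -/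
lemma qv_mono {i : Fin m} {w : (Fin n ⊕ Fin m) → ℝ} {l : Fin n}
    (hD : w ∈ DSet n i) (hl : isSucc i w l) :
    qv w ≤ qv (sw l i w) := by
  intro k
  have hnum : cntk k w ≤ cntk (n := n) k (sw l i w) := by
    rcases eq_or_ne k i with rfl | hki
    · rw [(bwd hD hl).2.1]; exact Nat.le_succ _
    · apply Finset.card_le_card
      intro l' hl'
      simp only [Finset.mem_filter, Finset.mem_univ, true_and] at hl' ⊢
      rw [sw_inr_ne _ _ _ hki]
      rcases eq_or_ne l' l with rfl | hne
      · rw [sw_inl_self]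
        exact le_trans (le_of_lt hl.1) hl'
      · rw [sw_inl_ne _ _ _ hne]; exact hl'
  simp only [qv]
  gcongr


lemma cntk_le (k : Fin m) (w : (Fin n ⊕ Fin m) → ℝ) : cntk k w ≤ n := by
  calc cntk k w ≤ Finset.univ.card := Finset.card_le_card (Finset.filter_subset _ _)
  _ = n := by simp

lemma exists_isSucc {i : Fin m} {w : (Fin n ⊕ Fin m) → ℝ} (hc : cntk i w < n) :
    ∃ l, isSucc i w l := by
  have hcard := Finset.card_filter_add_card_filter_not
    (s := (Finset.univ : Finset (Fin n))) (p := fun l => w (Sum.inl l) ≤ w (Sum.inr i))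
  simp only [Finset.card_univ, Fintype.card_fin] at hcard
  rw [cntk] at hc
  have hne : (Finset.univ.filter fun l : Fin n => ¬ w (Sum.inl l) ≤ w (Sum.inr i)).Nonempty := by
    rw [← Finset.card_pos]
    omega
  obtain ⟨b, hb, hmin⟩ := Finset.exists_min_image _ (fun l => w (Sum.inl l)) hne
  simp only [Finset.mem_filter, Finset.mem_univ, true_and, not_le] at hb hmin
  exact ⟨b, hb, hmin⟩

lemma exists_isPred {i : Fin m} {w : (Fin n ⊕ Fin m) → ℝ} (hc : 0 < cntk i w) :
    ∃ l, isPred i w l := by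
  have hne : (Finset.univ.filter fun l : Fin n => w (Sum.inl l) ≤ w (Sum.inr i)).Nonempty := by
    rw [← Finset.card_pos]; exact hc
  obtain ⟨b, hb, hmax⟩ := Finset.exists_max_image _ (fun l => w (Sum.inl l)) hne
  simp only [Finset.mem_filter, Finset.mem_univ, true_and] at hb hmax
  exact ⟨b, hb, fun l' h => hmax l' h⟩

lemma isSucc_unique {i : Fin m} {w : (Fin n ⊕ Fin m) → ℝ} {l1 l2 : Fin n}
    (hD : w ∈ DSet n i) (h1 : isSucc i w l1) (h2 : isSucc i w l2) : l1 = l2 := by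
  by_contra hne
  exact (hD.1 l1 l2 hne) (le_antisymm (h1.2 l2 h2.1) (h2.2 l1 h1.1))

lemma isPred_unique {i : Fin m} {w : (Fin n ⊕ Fin m) → ℝ} {l1 l2 : Fin n}
    (hD : w ∈ DSet n i) (h1 : isPred i w l1) (h2 : isPred i w l2) : l1 = l2 := by
  by_contra hne
  exact (hD.1 l1 l2 hne) (le_antisymm (h2.2 l1 h1.1) (h1.2 l2 h2.1))

/-- Key preimage identity. -/
lemma sw_preimage (i : Fin m) (l : Fin n) (j : ℕ) (w : (Fin n ⊕ Fin m) → ℝ) :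
    (sw l i w ∈ DSet n i ∧ cntk i (sw l i w) = j ∧ isSucc i (sw l i w) l) ↔
      (w ∈ DSet n i ∧ cntk i w = j + 1 ∧ isPred i w l) := by
  constructor
  · rintro ⟨hD, hc, hs⟩
    obtain ⟨hD', hc', hp'⟩ := bwd hD hs
    rw [sw_sw] at hD' hc' hp'
    exact ⟨hD', by omega, hp'⟩
  · rintro ⟨hD, hc, hp⟩
    obtain ⟨hD', hc', hs'⟩ := fwd hD hp
    exact ⟨hD', by omega, hs'⟩

section Meas

lemma measurable_cntk (k : Fin m) : Measurable (cntk (n := n) k) := by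
  have : cntk (n := n) k = fun w => ∑ l : Fin n,
      if w (Sum.inl l) ≤ w (Sum.inr k) then 1 else 0 := by
    funext w; exact Finset.card_filter _ _
  rw [this]
  exact Finset.measurable_sum _ fun l _ => Measurable.ite
    (measurableSet_le (measurable_pi_apply _) (measurable_pi_apply _))
    measurable_const measurable_const

lemma measurable_qv : Measurable (qv (n := n) (m := m)) := by
  apply measurable_pi_lambda
  intro k
  have : (fun w => qv (n := n) w k) =
      (fun c : ℕ => ((1 : ℝ) + c) / (n + 1)) ∘ cntk k := rfl
  rw [this]
  exact measurable_from_top.comp (measurable_cntk k)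

lemma measurable_sw (l : Fin n) (i : Fin m) : Measurable (sw (n := n) l i) :=
  measurable_pi_lambda _ fun c => measurable_pi_apply _

lemma measurableSet_ne_coords (a b : Fin n ⊕ Fin m) :
    MeasurableSet {w : (Fin n ⊕ Fin m) → ℝ | w a ≠ w b} := by
  have : {w : (Fin n ⊕ Fin m) → ℝ | w a ≠ w b}
      = {w : (Fin n ⊕ Fin m) → ℝ | (fun v : (Fin n ⊕ Fin m) → ℝ => v a) w
          = (fun v : (Fin n ⊕ Fin m) → ℝ => v b) w}ᶜ := rfl
  rw [this]
  exact (measurableSet_eq_fun (measurable_pi_apply a) (measurable_pi_apply b)).compl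

lemma measurableSet_lt_coords (a b : Fin n ⊕ Fin m) :
    MeasurableSet {w : (Fin n ⊕ Fin m) → ℝ | w a < w b} :=
  measurableSet_lt (measurable_pi_apply a) (measurable_pi_apply b)

lemma measurableSet_le_coords (a b : Fin n ⊕ Fin m) :
    MeasurableSet {w : (Fin n ⊕ Fin m) → ℝ | w a ≤ w b} :=
  measurableSet_le (measurable_pi_apply a) (measurable_pi_apply b)

lemma measurableSet_DSet (i : Fin m) : MeasurableSet (DSet n i) := by
  have : DSet n i =
      (⋂ (l : Fin n), ⋂ (l' : Fin n),
        {w : (Fin n ⊕ Fin m) → ℝ | l ≠ l' → w (Sum.inl l) ≠ w (Sum.inl l')}) ∩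
      ⋂ (l : Fin n), {w : (Fin n ⊕ Fin m) → ℝ | w (Sum.inl l) ≠ w (Sum.inr i)} := by
    ext w
    simp only [DSet, Set.mem_inter_iff, Set.mem_iInter, Set.mem_setOf_eq]
  rw [this]
  apply MeasurableSet.inter
  · refine MeasurableSet.iInter fun l => MeasurableSet.iInter fun l' => ?_
    by_cases h : l = l'
    · simp only [h]
      have : {w : (Fin n ⊕ Fin m) → ℝ | l' ≠ l' → w (Sum.inl l') ≠ w (Sum.inl l')} = Set.univ := by
        ext w; simp
      rw [this]; exact MeasurableSet.univ
    · have : {w : (Fin n ⊕ Fin m) → ℝ | l ≠ l' → w (Sum.inl l) ≠ w (Sum.inl l')}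
          = {w : (Fin n ⊕ Fin m) → ℝ | w (Sum.inl l) ≠ w (Sum.inl l')} := by
        ext w; simp [h]
      rw [this]
      exact measurableSet_ne_coords _ _
  · exact MeasurableSet.iInter fun l => measurableSet_ne_coords _ _

lemma measurableSet_isSucc (i : Fin m) (l : Fin n) :
    MeasurableSet {w : (Fin n ⊕ Fin m) → ℝ | isSucc i w l} := by
  have : {w : (Fin n ⊕ Fin m) → ℝ | isSucc i w l} =
      {w : (Fin n ⊕ Fin m) → ℝ | w (Sum.inr i) < w (Sum.inl l)} ∩
      ⋂ (l' : Fin n), ({w : (Fin n ⊕ Fin m) → ℝ | w (Sum.inr i) < w (Sum.inl l')}ᶜ ∪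
        {w : (Fin n ⊕ Fin m) → ℝ | w (Sum.inl l) ≤ w (Sum.inl l')}) := by
    ext w
    simp only [isSucc, Set.mem_inter_iff, Set.mem_iInter, Set.mem_setOf_eq, Set.mem_union,
      Set.mem_compl_iff]
    constructor
    · rintro ⟨h1, h2⟩
      exact ⟨h1, fun l' => or_iff_not_imp_left.mpr (fun h => h2 l' (not_not.mp h))⟩
    · rintro ⟨h1, h2⟩
      refine ⟨h1, fun l' hl' => ?_⟩
      rcases h2 l' with h | h
      · exact absurd hl' h
      · exact h
  rw [this]
  apply MeasurableSet.inter
  · exact measurableSet_lt_coords _ _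
  · exact MeasurableSet.iInter fun l' => MeasurableSet.union
      (measurableSet_lt_coords _ _).compl (measurableSet_le_coords _ _)

lemma measurableSet_isPred (i : Fin m) (l : Fin n) :
    MeasurableSet {w : (Fin n ⊕ Fin m) → ℝ | isPred i w l} := by
  have : {w : (Fin n ⊕ Fin m) → ℝ | isPred i w l} =
      {w : (Fin n ⊕ Fin m) → ℝ | w (Sum.inl l) ≤ w (Sum.inr i)} ∩
      ⋂ (l' : Fin n), ({w : (Fin n ⊕ Fin m) → ℝ | w (Sum.inl l') ≤ w (Sum.inr i)}ᶜ ∪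
        {w : (Fin n ⊕ Fin m) → ℝ | w (Sum.inl l') ≤ w (Sum.inl l)}) := by
    ext w
    simp only [isPred, Set.mem_inter_iff, Set.mem_iInter, Set.mem_setOf_eq, Set.mem_union,
      Set.mem_compl_iff]
    constructor
    · rintro ⟨h1, h2⟩
      exact ⟨h1, fun l' => or_iff_not_imp_left.mpr (fun h => h2 l' (not_not.mp h))⟩
    · rintro ⟨h1, h2⟩
      refine ⟨h1, fun l' hl' => ?_⟩
      rcases h2 l' with h | h
      · exact absurd hl' h
      · exact h
  rw [this]
  apply MeasurableSet.inter
  · exact measurableSet_le_coords _ _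
  · exact MeasurableSet.iInter fun l' => MeasurableSet.union
      (measurableSet_le_coords _ _).compl (measurableSet_le_coords _ _)

end Meas

end Stmt5Helper

open Stmt5Helper

/-- **Marginal conformal p-values are PRDS on the set of inliers.**
Calibration scores `S j = X (Sum.inl j)` are i.i.d. with nonatomic law `μ`; test scores
`T k = X (Sum.inr k)` are mutually independent and independent of the calibration
scores, with `T k ~ μ` for every inlier `k ∈ I`. Then for every inlier `i ∈ I`, every
increasing Borel set `A ⊆ ℝ^m` and grid values `x = (j+1)/(n+1) ≤ x' = (j'+1)/(n+1)`,
`P[p ∈ A | p i = x] ≤ P[p ∈ A | p i = x']`; moreover `P[p i = x] = 1/(n+1) > 0`, so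
these conditional probabilities are well defined. -/
theorem stmt5 {Ω : Type*} [MeasurableSpace Ω] (P : Measure Ω) [IsProbabilityMeasure P]
    (n m : ℕ) (hn : 1 ≤ n) (hm : 1 ≤ m)
    (μ : Measure ℝ) [IsProbabilityMeasure μ] [NullSingletonClass μ]
    (X : (Fin n ⊕ Fin m) → Ω → ℝ)
    (hmeas : ∀ i, Measurable (X i))
    (hindep : iIndepFun X P)
    (I : Set (Fin m))
    (hlawS : ∀ j : Fin n, Measure.map (X (Sum.inl j)) P = μ)
    (hlawT : ∀ k ∈ I, Measure.map (X (Sum.inr k)) P = μ)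
    (p : Fin m → Ω → ℝ)
    (hp : ∀ k ω, p k ω = confPval (fun j : Fin n => X (Sum.inl j)) (X (Sum.inr k)) ω)
    (i : Fin m) (hi : i ∈ I) :
    (∀ j : Fin (n + 1),
        P {ω | p i ω = ((j : ℕ) + 1) / (n + 1)} = ENNReal.ofReal (1 / (n + 1))) ∧
      ∀ (A : Set (Fin m → ℝ)), MeasurableSet A → (∀ a ∈ A, ∀ b, a ≤ b → b ∈ A) →
        ∀ j j' : Fin (n + 1), (j : ℕ) ≤ (j' : ℕ) →
          P[|{ω | p i ω = ((j : ℕ) + 1) / (n + 1)}] {ω | (fun k => p k ω) ∈ A} ≤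
            P[|{ω | p i ω = ((j' : ℕ) + 1) / (n + 1)}] {ω | (fun k => p k ω) ∈ A} := by
  classical
  -- the joint score vector and its law
  set W : Ω → (Fin n ⊕ Fin m) → ℝ := fun ω c => X c ω with hWdef
  have hW : Measurable W := measurable_pi_lambda _ fun c => hmeas c
  set θ : (Fin n ⊕ Fin m) → Measure ℝ := fun c => Measure.map (X c) P with hθdef
  haveI hθprob : ∀ c, IsProbabilityMeasure (θ c) :=
    fun c => Measure.isProbabilityMeasure_map (hmeas c).aemeasurable
  haveI hθsf : ∀ c, SigmaFinite (θ c) := fun c => inferInstance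
  have hpi : Measure.map W P = Measure.pi θ := by
    refine (Measure.pi_eq (μ := θ) fun s hs => ?_).symm
    rw [Measure.map_apply hW (MeasurableSet.univ_pi hs)]
    have hpre : W ⁻¹' (Set.univ.pi s) = ⋂ c ∈ Finset.univ, X c ⁻¹' s c := by
      ext ω; simp [hWdef, Set.mem_pi]
    rw [hpre, hindep.measure_inter_preimage_eq_mul (sets := s) Finset.univ (fun c _ => hs c)]
    exact Finset.prod_congr rfl fun c _ => (Measure.map_apply (hmeas c) (hs c)).symm
  set ν : Measure ((Fin n ⊕ Fin m) → ℝ) := Measure.pi θ with hνdef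
  haveI : IsProbabilityMeasure ν := by rw [hνdef]; infer_instance
  have hPW : ∀ S : Set ((Fin n ⊕ Fin m) → ℝ), MeasurableSet S → P (W ⁻¹' S) = ν S :=
    fun S hS => by rw [← hpi, Measure.map_apply hW hS]
  -- swap invariance
  have hθl : ∀ l : Fin n, θ (Sum.inl l) = μ := hlawS
  have hθi : θ (Sum.inr i) = μ := hlawT i hi
  have hswap : ∀ (l : Fin n) (B : Set ((Fin n ⊕ Fin m) → ℝ)), MeasurableSet B →
      ν (sw l i ⁻¹' B) = ν B := by
    intro l
    set e := Equiv.swap (Sum.inl l : Fin n ⊕ Fin m) (Sum.inr i) with hedef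
    have hθe : ∀ c, θ (e c) = θ c := by
      intro c
      by_cases h1 : c = Sum.inl l
      · subst h1; rw [hedef, Equiv.swap_apply_left, hθi, hθl]
      · by_cases h2 : c = Sum.inr i
        · subst h2; rw [hedef, Equiv.swap_apply_right, hθi, hθl]
        · rw [hedef, Equiv.swap_apply_of_ne_of_ne h1 h2]
    have hmp : Measure.map (sw l i) ν = ν := by
      rw [hνdef]
      refine (Measure.pi_eq (μ := θ) fun s hs => ?_).symm
      rw [Measure.map_apply (measurable_sw l i) (MeasurableSet.univ_pi hs)]
      have hpre : sw l i ⁻¹' (Set.univ.pi s) = Set.univ.pi (fun c => s (e c)) := by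
        ext w
        simp only [Set.mem_preimage, Set.mem_pi, Set.mem_univ, true_imp_iff]
        constructor
        · intro h c
          have := h (e c)
          rwa [sw, hedef, Equiv.swap_apply_self] at this
        · intro h c
          have := h (e c)
          rwa [hedef, Equiv.swap_apply_self] at this
      rw [hpre, Measure.pi_pi]
      calc ∏ c, θ c (s (e c)) = ∏ c, θ (e c) (s (e c)) :=
            Finset.prod_congr rfl fun c _ => by rw [hθe]
        _ = ∏ c, θ c (s c) := Equiv.prod_comp e fun c => θ c (s c)
    intro B hB
    conv_rhs => rw [← hmp]
    rw [Measure.map_apply (measurable_sw l i) hB]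
  -- null set of ties
  have hpair : ∀ a b : Fin n ⊕ Fin m, a ≠ b → Measure.map (X a) P = μ →
      Measure.map (X b) P = μ → P {ω | X a ω = X b ω} = 0 := by
    intro a b hab ha hb
    have hind : IndepFun (X a) (X b) P := hindep.indepFun hab
    have hmap : Measure.map (fun ω => (X a ω, X b ω)) P = μ.prod μ := by
      rw [(indepFun_iff_map_prod_eq_prod_map_map (hmeas a).aemeasurable
        (hmeas b).aemeasurable).mp hind, ha, hb]
    have hdiag : MeasurableSet {q : ℝ × ℝ | q.1 = q.2} :=
      measurableSet_eq_fun measurable_fst measurable_snd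
    have hset : {ω | X a ω = X b ω} = (fun ω => (X a ω, X b ω)) ⁻¹' {q : ℝ × ℝ | q.1 = q.2} := rfl
    rw [hset, ← Measure.map_apply ((hmeas a).prodMk (hmeas b)) hdiag, hmap,
      Measure.prod_apply hdiag]
    have hz : ∀ x : ℝ, μ (Prod.mk x ⁻¹' {q : ℝ × ℝ | q.1 = q.2}) = 0 := by
      intro x
      have : (Prod.mk x ⁻¹' {q : ℝ × ℝ | q.1 = q.2}) = {x} := by
        ext y; simp [eq_comm]
      rw [this]; exact measure_singleton x
    simp [hz]
  have hDnull : ν ((DSet n i)ᶜ) = 0 := by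
    rw [← hPW _ (measurableSet_DSet (m := m) i).compl]
    apply measure_mono_null (t :=
      (⋃ (l : Fin n) (l' : Fin n), {ω | l ≠ l' ∧ X (Sum.inl l) ω = X (Sum.inl l') ω}) ∪
        ⋃ (l : Fin n), {ω | X (Sum.inl l) ω = X (Sum.inr i) ω})
    · intro ω hω
      simp only [Set.mem_preimage, Set.mem_compl_iff, DSet, Set.mem_setOf_eq, hWdef] at hω
      rw [not_and_or] at hω
      rcases hω with h | h
      · push_neg at h
        obtain ⟨l, l', hne, heq⟩ := h
        exact Or.inl (Set.mem_iUnion.mpr ⟨l, Set.mem_iUnion.mpr ⟨l', hne, heq⟩⟩)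
      · push_neg at h
        obtain ⟨l, heq⟩ := h
        exact Or.inr (Set.mem_iUnion.mpr ⟨l, heq⟩)
    · apply measure_union_null
      · apply measure_iUnion_null; intro l
        apply measure_iUnion_null; intro l'
        rcases eq_or_ne l l' with rfl | hne
        · simp
        · apply measure_mono_null (t := {ω | X (Sum.inl l) ω = X (Sum.inl l') ω})
          · intro ω h; exact h.2
          · exact hpair _ _ (by simp [hne]) (hlawS l) (hlawS l')
      · apply measure_iUnion_null; intro l
        exact hpair _ _ (by simp) (hlawS l) (hlawT i hi)
  have nuD : ∀ s : Set ((Fin n ⊕ Fin m) → ℝ), ν (s ∩ DSet n i) = ν s := by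
    intro s
    refine le_antisymm (measure_mono Set.inter_subset_left) ?_
    calc ν s = ν ((s ∩ DSet n i) ∪ (s ∩ (DSet n i)ᶜ)) := by rw [Set.inter_union_compl]
      _ ≤ ν (s ∩ DSet n i) + ν (s ∩ (DSet n i)ᶜ) := measure_union_le _ _
      _ = ν (s ∩ DSet n i) := by
          rw [measure_mono_null Set.inter_subset_right hDnull, add_zero]
  -- the partition sets
  set DD : ℕ → Set ((Fin n ⊕ Fin m) → ℝ) :=
    fun j => {w | w ∈ DSet n i ∧ cntk i w = j} with hDDdef
  set SS : ℕ → Fin n → Set ((Fin n ⊕ Fin m) → ℝ) :=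
    fun j l => {w | w ∈ DSet n i ∧ cntk i w = j ∧ isSucc i w l} with hSSdef
  set TT : ℕ → Fin n → Set ((Fin n ⊕ Fin m) → ℝ) :=
    fun j l => {w | w ∈ DSet n i ∧ cntk i w = j ∧ isPred i w l} with hTTdef
  have hDDmeas : ∀ j : ℕ, MeasurableSet (DD j) := by
    intro j
    have : DD j = DSet n i ∩ cntk i ⁻¹' {j} := by
      ext w; simp [hDDdef, Set.mem_preimage, Set.mem_singleton_iff]
    rw [this]
    exact (measurableSet_DSet i).inter (measurable_cntk i (measurableSet_singleton j))
  have hSSmeas : ∀ (j : ℕ) (l : Fin n), MeasurableSet (SS j l) := by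
    intro j l
    have : SS j l = (DSet n i ∩ cntk i ⁻¹' {j}) ∩ {w | isSucc i w l} := by
      ext w
      simp only [hSSdef, Set.mem_setOf_eq, Set.mem_inter_iff, Set.mem_preimage,
        Set.mem_singleton_iff]
      tauto
    rw [this]
    exact ((measurableSet_DSet i).inter (measurable_cntk i (measurableSet_singleton j))).inter
      (measurableSet_isSucc i l)
  have hTTmeas : ∀ (j : ℕ) (l : Fin n), MeasurableSet (TT j l) := by
    intro j l
    have : TT j l = (DSet n i ∩ cntk i ⁻¹' {j}) ∩ {w | isPred i w l} := by
      ext w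
      simp only [hTTdef, Set.mem_setOf_eq, Set.mem_inter_iff, Set.mem_preimage,
        Set.mem_singleton_iff]
      tauto
    rw [this]
    exact ((measurableSet_DSet i).inter (measurable_cntk i (measurableSet_singleton j))).inter
      (measurableSet_isPred i l)
  -- partition identities
  have hpartS : ∀ (B : Set ((Fin n ⊕ Fin m) → ℝ)), MeasurableSet B → ∀ j : ℕ, j < n →
      ν (DD j ∩ B) = ∑ l : Fin n, ν (SS j l ∩ B) := by
    intro B hB j hj
    have hU : ⋃ l, (SS j l ∩ B) = DD j ∩ B := by
      ext w
      simp only [Set.mem_iUnion, Set.mem_inter_iff, hSSdef, hDDdef, Set.mem_setOf_eq]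
      constructor
      · rintro ⟨l, ⟨hD, hc, _⟩, hBw⟩; exact ⟨⟨hD, hc⟩, hBw⟩
      · rintro ⟨⟨hD, hc⟩, hBw⟩
        obtain ⟨l, hl⟩ := exists_isSucc (i := i) (w := w) (by rw [hc]; exact hj)
        exact ⟨l, ⟨hD, hc, hl⟩, hBw⟩
    rw [← hU, measure_iUnion ?_ (fun l => (hSSmeas j l).inter hB), tsum_fintype]
    intro l1 l2 hne
    simp only [Function.onFun]
    apply Set.disjoint_left.mpr
    rintro w ⟨⟨hD, _, hs1⟩, _⟩ ⟨⟨_, _, hs2⟩, _⟩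
    exact hne (isSucc_unique hD hs1 hs2)
  have hpartT : ∀ (B : Set ((Fin n ⊕ Fin m) → ℝ)), MeasurableSet B → ∀ j : ℕ, 0 < j →
      ν (DD j ∩ B) = ∑ l : Fin n, ν (TT j l ∩ B) := by
    intro B hB j hj
    have hU : ⋃ l, (TT j l ∩ B) = DD j ∩ B := by
      ext w
      simp only [Set.mem_iUnion, Set.mem_inter_iff, hTTdef, hDDdef, Set.mem_setOf_eq]
      constructor
      · rintro ⟨l, ⟨hD, hc, _⟩, hBw⟩; exact ⟨⟨hD, hc⟩, hBw⟩
      · rintro ⟨⟨hD, hc⟩, hBw⟩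
        obtain ⟨l, hl⟩ := exists_isPred (i := i) (w := w) (by rw [hc]; exact hj)
        exact ⟨l, ⟨hD, hc, hl⟩, hBw⟩
    rw [← hU, measure_iUnion ?_ (fun l => (hTTmeas j l).inter hB), tsum_fintype]
    intro l1 l2 hne
    simp only [Function.onFun]
    apply Set.disjoint_left.mpr
    rintro w ⟨⟨hD, _, hs1⟩, _⟩ ⟨⟨_, _, hs2⟩, _⟩
    exact hne (isPred_unique hD hs1 hs2)
  -- the key swap computation
  have hkey : ∀ (B : Set ((Fin n ⊕ Fin m) → ℝ)), MeasurableSet B → ∀ j : ℕ, j < n →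
      ν (DD j ∩ B) = ∑ l : Fin n, ν (TT (j + 1) l ∩ sw l i ⁻¹' B) := by
    intro B hB j hj
    rw [hpartS B hB j hj]
    refine Finset.sum_congr rfl fun l _ => ?_
    have hmeasSB : MeasurableSet (SS j l ∩ B) := (hSSmeas j l).inter hB
    rw [← hswap l _ hmeasSB]
    congr 1
    ext w
    simp only [Set.mem_preimage, Set.mem_inter_iff, hSSdef, hTTdef, Set.mem_setOf_eq]
    constructor
    · rintro ⟨hS, hBw⟩
      exact ⟨(sw_preimage i l j w).mp hS, hBw⟩
    · rintro ⟨hT, hBw⟩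
      exact ⟨(sw_preimage i l j w).mpr hT, hBw⟩
  -- equality of the grid probabilities
  have hstepEq : ∀ j : ℕ, j < n → ν (DD j) = ν (DD (j + 1)) := by
    intro j hj
    have h1 := hkey Set.univ MeasurableSet.univ j hj
    have h2 := hpartT Set.univ MeasurableSet.univ (j + 1) (Nat.succ_pos j)
    simp only [Set.preimage_univ, Set.inter_univ] at h1 h2
    rw [h1, h2]
  have hconst : ∀ j : ℕ, j ≤ n → ν (DD j) = ν (DD 0) := by
    intro j
    induction j with
    | zero => intro _; rfl
    | succ j ih => intro h; rw [← hstepEq j (by omega)]; exact ih (by omega)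
  have hcover : ⋃ j ∈ Finset.range (n + 1), DD j = DSet n i := by
    ext w
    simp only [Set.mem_iUnion, hDDdef, Set.mem_setOf_eq, Finset.mem_range]
    constructor
    · rintro ⟨j, _, hD, _⟩; exact hD
    · intro hD
      exact ⟨cntk i w, by have := cntk_le (n := n) i w; omega, hD, rfl⟩
  have hsum : ∑ j ∈ Finset.range (n + 1), ν (DD j) = 1 := by
    rw [← measure_biUnion_finset ?_ (fun j _ => hDDmeas j), hcover]
    · rw [← Set.univ_inter (DSet n i), nuD, measure_univ]
    · intro j1 _ j2 _ hne
      apply Set.disjoint_left.mpr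
      rintro w ⟨_, hc1⟩ ⟨_, hc2⟩
      exact hne (hc1 ▸ hc2 ▸ rfl)
  have hval : ν (DD 0) = (((n + 1 : ℕ) : ℝ≥0∞))⁻¹ := by
    rw [Finset.sum_congr rfl (fun j hj => hconst j (by
      simp only [Finset.mem_range] at hj; omega))] at hsum
    rw [Finset.sum_const, Finset.card_range, nsmul_eq_mul] at hsum
    exact ENNReal.eq_inv_of_mul_eq_one_left (by rwa [mul_comm] at hsum)
  have hDDval : ∀ j : ℕ, j ≤ n → ν (DD j) = (((n + 1 : ℕ) : ℝ≥0∞))⁻¹ :=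
    fun j hj => (hconst j hj).trans hval
  -- event translations
  have hpq : ∀ (ω : Ω) (k : Fin m), p k ω = qv (n := n) (W ω) k := by
    intro ω k
    rw [hp]
    simp [confPval, qv, cntk, hWdef]
  have hEv : ∀ j : ℕ, {ω | p i ω = ((j : ℝ) + 1) / ((n : ℝ) + 1)}
      = W ⁻¹' {w | cntk i w = j} := by
    intro j
    ext ω
    simp only [Set.mem_setOf_eq, Set.mem_preimage, hpq ω i, qv]
    have hden : ((n : ℝ) + 1) ≠ 0 := by positivity
    constructor
    · intro h
      have h2 : (1 : ℝ) + (cntk i (W ω) : ℝ) = (j : ℝ) + 1 := by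
        have := congrArg (fun x : ℝ => x * ((n : ℝ) + 1)) h
        simpa [div_mul_cancel₀, hden] using this
      have h3 : ((cntk i (W ω) : ℝ)) = (j : ℝ) := by linarith
      exact_mod_cast h3
    · intro h
      rw [h]
      ring
  have hEvMeas : ∀ j : ℕ, MeasurableSet {w : (Fin n ⊕ Fin m) → ℝ | cntk i w = j} :=
    fun j => measurable_cntk i (measurableSet_singleton j)
  have hPs : ∀ j : ℕ, j ≤ n →
      P {ω | p i ω = ((j : ℝ) + 1) / ((n : ℝ) + 1)} = (((n + 1 : ℕ) : ℝ≥0∞))⁻¹ := by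
    intro j hj
    rw [hEv j, hPW _ (hEvMeas j), ← nuD {w | cntk i w = j}]
    have : {w : (Fin n ⊕ Fin m) → ℝ | cntk i w = j} ∩ DSet n i = DD j := by
      ext w; simp only [Set.mem_inter_iff, Set.mem_setOf_eq, hDDdef]; tauto
    rw [this]
    exact hDDval j hj
  constructor
  · intro j
    rw [hPs (j : ℕ) (Nat.lt_succ_iff.mp j.isLt)]
    have h1 : (1 : ℝ) / ((n : ℝ) + 1) = (((n + 1 : ℕ) : ℝ))⁻¹ := by
      push_cast; rw [one_div]
    rw [h1, ENNReal.ofReal_inv_of_pos (by positivity), ENNReal.ofReal_natCast]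
  · intro A hA hInc j j' hjj'
    set B := qv (n := n) (m := m) ⁻¹' A with hBdef
    have hB : MeasurableSet B := measurable_qv hA
    have hBmono : ∀ (l : Fin n) (j : ℕ) (w : (Fin n ⊕ Fin m) → ℝ),
        w ∈ TT (j + 1) l → sw l i w ∈ B → w ∈ B := by
      rintro l j w ⟨hD, hc, hpred⟩ hmem
      obtain ⟨hD', hc', hsucc'⟩ := fwd hD hpred
      have hle := qv_mono hD' hsucc'
      rw [sw_sw] at hle
      exact hInc _ hmem _ hle
    have hmono : ∀ j : ℕ, j < n → ν (DD j ∩ B) ≤ ν (DD (j + 1) ∩ B) := by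
      intro j hj
      rw [hkey B hB j hj, hpartT B hB (j + 1) (Nat.succ_pos j)]
      refine Finset.sum_le_sum fun l _ => measure_mono ?_
      rintro w ⟨hT, hw⟩
      exact ⟨hT, hBmono l j w hT hw⟩
    have hchain : ∀ (a d : ℕ), a + d ≤ n → ν (DD a ∩ B) ≤ ν (DD (a + d) ∩ B) := by
      intro a d
      induction d with
      | zero => intro _; exact le_refl _
      | succ d ih =>
          intro h
          refine (ih (by omega)).trans ?_
          have := hmono (a + d) (by omega)
          rwa [Nat.add_succ]
    have hsetev : ∀ jj : ℕ, {ω | p i ω = ((jj : ℝ) + 1) / ((n : ℝ) + 1)} ∩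
        {ω | (fun k => p k ω) ∈ A} = W ⁻¹' ({w | cntk i w = jj} ∩ B) := by
      intro jj
      rw [hEv jj]
      ext ω
      have hfun : (fun k => p k ω) = qv (n := n) (W ω) := funext fun k => hpq ω k
      simp only [Set.mem_inter_iff, Set.mem_preimage, Set.mem_setOf_eq, hBdef, hfun]
    have hcond : ∀ jj : ℕ, jj ≤ n →
        P[|{ω | p i ω = ((jj : ℝ) + 1) / ((n : ℝ) + 1)}] {ω | (fun k => p k ω) ∈ A}
          = ((n + 1 : ℕ) : ℝ≥0∞) * ν (DD jj ∩ B) := by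
      intro jj hjj
      have hms : MeasurableSet {ω | p i ω = ((jj : ℝ) + 1) / ((n : ℝ) + 1)} := by
        rw [hEv jj]; exact hW (hEvMeas jj)
      rw [cond_apply hms P, hPs jj hjj, inv_inv, hsetev jj,
        hPW _ ((hEvMeas jj).inter hB), ← nuD ({w | cntk i w = jj} ∩ B)]
      congr 2
      ext w
      simp only [Set.mem_inter_iff, Set.mem_setOf_eq, hDDdef]
      tauto
    rw [hcond (j : ℕ) (Nat.lt_succ_iff.mp j.isLt), hcond (j' : ℕ) (Nat.lt_succ_iff.mp j'.isLt)]
    apply mul_le_mul_right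
    obtain ⟨d, hd⟩ : ∃ d, (j' : ℕ) = (j : ℕ) + d := ⟨(j' : ℕ) - (j : ℕ), by omega⟩
    rw [hd]
    exact hchain (j : ℕ) d (by have := j'.isLt; omega)
end

section
/- Let n ≥ 1 and δ ∈ (0,1). Let U_1, …, U_n be i.i.d. uniform on [0,1] with order statistics U_(1) ≤ … ≤ U_(n), and let 0 ≤ b_1 ≤ b_2 ≤ … ≤ b_n ≤ 1 be real numbers such that ℙ[ U_(1) ≤ b_1, …, U_(n) ≤ b_n ] ≥ 1 − δ; set b_{n+1} := 1. Let ν be any Borel probability measure on ℝ, let S_1, …, S_n, T be i.i.d. with law ν, and let p(T) = (1 + #{i : S_i ≤ T})/(n+1) be the marginal conformal p-value, so that the adjusted p-value is b_{(n+1)p(T)} (i.e., b_j where j = 1 + #{i : S_i ≤ T}). Then, with probability at least 1 − δ over mix of the calibration scores (S_1, …, S_n), one has ℙ[ b_{(n+1)p(T)} ≤ t | S_1, …, S_n ] ≤ t for every t ∈ (0,1); that is, the adjusted p-value is super-uniform conditionally on the calibration data, simultaneously for all thresholds t, on an event of probability at least 1 − δ. -/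
open MeasureTheory ProbabilityTheory
open scoped Classical

open Set

section aux
variable (ν : Measure ℝ) [IsProbabilityMeasure ν]

section aux
variable (ν : Measure ℝ) [IsProbabilityMeasure ν]

noncomputable def sQ (u : ℝ) : ℝ := sInf {x | u ≤ cdf ν x}

lemma sQ_set_nonempty {u : ℝ} (hu : u < 1) : {x | u ≤ cdf ν x}.Nonempty := by
  have h := (tendsto_cdf_atTop (μ := ν)).eventually (eventually_gt_nhds hu)
  obtain ⟨x, hx⟩ := h.exists
  exact ⟨x, hx.le⟩

lemma sQ_set_bddBelow {u : ℝ} (hu : 0 < u) : BddBelow {x | u ≤ cdf ν x} := by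
  have h := (tendsto_cdf_atBot (μ := ν)).eventually (eventually_lt_nhds hu)
  obtain ⟨x0, hx0⟩ := h.exists
  refine ⟨x0, fun y hy => ?_⟩
  by_contra hc
  push_neg at hc
  exact absurd (hy.trans ((cdf ν).mono hc.le)) (not_le.2 hx0)

lemma le_cdf_sQ {u : ℝ} (h0 : 0 < u) (h1 : u < 1) : u ≤ cdf ν (sQ ν u) := by
  set S := {x | u ≤ cdf ν x} with hS
  by_cases hm : sInf S ∈ S
  · exact hm
  · have hall : ∀ x ∈ Ioi (sInf S), u ≤ cdf ν x := by
      intro x hx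
      obtain ⟨s, hs, hsx⟩ := exists_lt_of_csInf_lt (sQ_set_nonempty ν h1) hx
      exact hs.trans ((cdf ν).mono hsx.le)
    have ht : Filter.Tendsto (cdf ν) (nhdsWithin (sInf S) (Ioi (sInf S))) (nhds (cdf ν (sInf S))) :=
      ((cdf ν).right_continuous (sInf S)).tendsto.mono_left
        (nhdsWithin_mono _ Ioi_subset_Ici_self)
    exact ge_of_tendsto ht (eventually_nhdsWithin_of_forall hall)

lemma sQ_le_iff {u x : ℝ} (h0 : 0 < u) (h1 : u < 1) : sQ ν u ≤ x ↔ u ≤ cdf ν x := by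
  constructor
  · intro h
    exact (le_cdf_sQ ν h0 h1).trans ((cdf ν).mono h)
  · intro h
    exact csInf_le (sQ_set_bddBelow ν h0) h

lemma sQ_mono {u v : ℝ} (h0 : 0 < u) (huv : u ≤ v) (h1 : v < 1) : sQ ν u ≤ sQ ν v :=
  csInf_le_csInf (sQ_set_bddBelow ν h0) (sQ_set_nonempty ν h1)
    (fun x hx => le_trans huv hx)

lemma measure_Iio_sQ_le {u : ℝ} (h0 : 0 < u) (h1 : u < 1) :
    ν (Iio (sQ ν u)) ≤ ENNReal.ofReal u := by
  have hlt : ∀ x < sQ ν u, cdf ν x < u := by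
    intro x hx
    by_contra hc
    push_neg at hc
    exact absurd (csInf_le (sQ_set_bddBelow ν h0) hc) (not_le.2 hx)
  have hset : Iio (sQ ν u) = ⋃ n : ℕ, Iic (sQ ν u - ((n : ℝ) + 1)⁻¹) := by
    ext x
    simp only [mem_Iio, mem_iUnion, mem_Iic]
    constructor
    · intro hx
      obtain ⟨n, hn⟩ := exists_nat_one_div_lt (sub_pos.2 hx)
      exact ⟨n, by rw [one_div] at hn; linarith⟩
    · rintro ⟨n, hn⟩
      have : (0:ℝ) < ((n:ℝ)+1)⁻¹ := by positivity
      linarith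
  rw [hset, Directed.measure_iUnion]
  · refine iSup_le fun n => ?_
    rcases lt_or_ge (sQ ν u - ((n : ℝ) + 1)⁻¹) (sQ ν u) with h | h
    · rw [← ofReal_cdf]
      exact ENNReal.ofReal_le_ofReal (hlt _ h).le
    · exfalso
      have hp : (0:ℝ) < ((n:ℝ)+1)⁻¹ := by positivity
      linarith
  · refine Monotone.directed_le fun i j hij => Iic_subset_Iic.2 ?_
    have hij' : (i:ℝ) ≤ j := Nat.cast_le.2 hij
    have : ((j:ℝ)+1)⁻¹ ≤ ((i:ℝ)+1)⁻¹ := by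
      apply inv_anti₀ (by positivity)
      linarith
    linarith



noncomputable def Qf (u : ℝ) : ℝ := if 0 < u ∧ u < 1 then sQ ν u else sQ ν (1/2)

lemma Qf_preimage_Iic (x : ℝ) :
    Qf ν ⁻¹' Iic x =
      (Ioo (0:ℝ) 1 ∩ Iic (cdf ν x)) ∪ ((Ioo (0:ℝ) 1)ᶜ ∩ {u : ℝ | sQ ν (1/2) ≤ x}) := by
  ext u
  by_cases hu : 0 < u ∧ u < 1
  · simp only [mem_preimage, mem_Iic, Qf, if_pos hu, mem_union, mem_inter_iff, mem_Ioo,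
      mem_compl_iff, mem_setOf_eq, not_and_or]
    rw [sQ_le_iff ν hu.1 hu.2]
    constructor
    · intro h; exact Or.inl ⟨hu, h⟩
    · rintro (⟨_, h⟩ | ⟨h, _⟩)
      · exact h
      · exact absurd hu (by tauto)
  · simp only [mem_preimage, mem_Iic, Qf, if_neg hu, mem_union, mem_inter_iff, mem_Ioo,
      mem_compl_iff, mem_setOf_eq]
    constructor
    · intro h; exact Or.inr ⟨by simpa [mem_Ioo, not_and_or] using fun a b => hu ⟨a, b⟩, h⟩
    · rintro (⟨h, _⟩ | ⟨_, h⟩)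
      · exact absurd h hu
      · exact h

lemma Qf_measurable : Measurable (Qf ν) := by
  apply measurable_of_Iic
  intro x
  rw [Qf_preimage_Iic]
  refine ((measurableSet_Ioo.inter measurableSet_Iic).union
    (measurableSet_Ioo.compl.inter ?_))
  by_cases h : sQ ν (1/2) ≤ x
  · simp only [h]; simpa using MeasurableSet.univ
  · simp only [h]; simpa using MeasurableSet.empty

lemma Qf_measurePreserving :
    MeasurePreserving (Qf ν) (volume.restrict (Icc (0:ℝ) 1)) ν := by
  refine ⟨Qf_measurable ν, ?_⟩
  refine Measure.ext_of_Iic _ _ fun x => ?_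
  rw [Measure.map_apply (Qf_measurable ν) measurableSet_Iic, Qf_preimage_Iic]
  have hnull : (volume.restrict (Icc (0:ℝ) 1)) ((Ioo (0:ℝ) 1)ᶜ ∩ {u : ℝ | sQ ν (1/2) ≤ x}) = 0 := by
    refine measure_mono_null (inter_subset_left) ?_
    rw [Measure.restrict_apply' measurableSet_Icc]
    have : (Ioo (0:ℝ) 1)ᶜ ∩ Icc 0 1 = {0, 1} := by
      ext y
      simp only [mem_inter_iff, mem_compl_iff, mem_Ioo, mem_Icc, mem_insert_iff,
        mem_singleton_iff, not_and_or, not_lt]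
      constructor
      · rintro ⟨h | h, h0, h1⟩
        · exact Or.inl (le_antisymm h0 h).symm
        · exact Or.inr (le_antisymm h1 h)
      · rintro (rfl | rfl) <;> simp
    rw [this]
    have : volume ({0, 1} : Set ℝ) ≤ volume ({0}:Set ℝ) + volume ({1}:Set ℝ) :=
      measure_union_le _ _
    simpa using le_antisymm (by simpa using this) (zero_le (a := _))
  have hunion : (volume.restrict (Icc (0:ℝ) 1))
      (Ioo (0:ℝ) 1 ∩ Iic (cdf ν x) ∪ (Ioo (0:ℝ) 1)ᶜ ∩ {u : ℝ | sQ ν (1/2) ≤ x}) =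
      (volume.restrict (Icc (0:ℝ) 1)) (Ioo (0:ℝ) 1 ∩ Iic (cdf ν x)) := by
    refine le_antisymm ?_ (measure_mono subset_union_left)
    refine (measure_union_le _ _).trans ?_
    rw [hnull, add_zero]
  rw [hunion]
  have hc0 : 0 ≤ cdf ν x := cdf_nonneg ν x
  have hc1 : cdf ν x ≤ 1 := cdf_le_one ν x
  rw [Measure.restrict_apply' measurableSet_Icc]
  have hsub : Ioo (0:ℝ) 1 ∩ Iic (cdf ν x) ∩ Icc 0 1 = Ioo (0:ℝ) 1 ∩ Iic (cdf ν x) :=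
    inter_eq_left.2 ((inter_subset_left).trans Ioo_subset_Icc_self)
  rw [hsub, ← ofReal_cdf]
  rcases eq_or_lt_of_le hc1 with h1 | h1
  · have : Ioo (0:ℝ) 1 ∩ Iic (cdf ν x) = Ioo 0 1 := by
      rw [inter_eq_left]; intro y hy; exact mem_Iic.2 (hy.2.le.trans h1.ge)
    rw [this, Real.volume_Ioo, h1, sub_zero]
  · have : Ioo (0:ℝ) 1 ∩ Iic (cdf ν x) = Ioc 0 (cdf ν x) := by
      ext y
      simp only [mem_inter_iff, mem_Ioo, mem_Iic, mem_Ioc]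
      constructor
      · rintro ⟨⟨h0', _⟩, h2⟩; exact ⟨h0', h2⟩
      · rintro ⟨h0', h2⟩; exact ⟨⟨h0', lt_of_le_of_lt h2 h1⟩, h2⟩
    rw [this, Real.volume_Ioc, sub_zero]



end aux

lemma ord_le_iff {n : ℕ} (v : Fin n → ℝ) (k : Fin n) (y : ℝ) :
    v (Tuple.sort v k) ≤ y ↔ (k:ℕ) < (Finset.univ.filter fun i => v i ≤ y).card := by
  have h := Tuple.lt_card_le_iff_apply_le_of_monotone (f := v ∘ Tuple.sort v) (a := y)
    (j := k) (Tuple.monotone_sort v)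
  have hcard : (Finset.univ.filter fun i => (v ∘ Tuple.sort v) i ≤ y).card =
      (Finset.univ.filter fun i => v i ≤ y).card := by
    have h2 : Fintype.card {i // (v ∘ Tuple.sort v) i ≤ y} = Fintype.card {i // v i ≤ y} :=
      Fintype.card_congr (Equiv.subtypeEquiv (Tuple.sort v) fun a => Iff.rfl)
    rw [← Fintype.card_subtype, h2, Fintype.card_subtype]
  rw [hcard] at h
  exact h.symm

lemma ord_le_iff_exists {n : ℕ} (v : Fin n → ℝ) (k : Fin n) (y : ℝ) :
    v (Tuple.sort v k) ≤ y ↔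
      ∃ A : Finset (Fin n), A.card = (k:ℕ) + 1 ∧ ∀ i ∈ A, v i ≤ y := by
  rw [ord_le_iff]
  constructor
  · intro h
    obtain ⟨A, hA, hAcard⟩ := Finset.exists_subset_card_eq (Nat.succ_le_of_lt h)
    exact ⟨A, hAcard, fun i hi => (Finset.mem_filter.1 (hA hi)).2⟩
  · rintro ⟨A, hAcard, hA⟩
    have hsub : A ⊆ Finset.univ.filter fun i => v i ≤ y := fun i hi =>
      Finset.mem_filter.2 ⟨Finset.mem_univ i, hA i hi⟩
    have := Finset.card_le_card hsub
    omega

lemma ord_measurable {n : ℕ} (k : Fin n) :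
    Measurable fun v : Fin n → ℝ => v (Tuple.sort v k) := by
  apply measurable_of_Iic
  intro y
  have : (fun v : Fin n → ℝ => v (Tuple.sort v k)) ⁻¹' Iic y =
      ⋃ A ∈ {A : Finset (Fin n) | A.card = (k:ℕ) + 1}, ⋂ i ∈ A, {v : Fin n → ℝ | v i ≤ y} := by
    ext v
    simp only [mem_preimage, mem_Iic, mem_iUnion, mem_iInter, mem_setOf_eq]
    rw [ord_le_iff_exists]
    constructor
    · rintro ⟨A, h1, h2⟩; exact ⟨A, h1, h2⟩
    · rintro ⟨A, h1, h2⟩; exact ⟨A, h1, h2⟩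
  rw [this]
  refine MeasurableSet.biUnion (Set.to_countable _) fun A _ => ?_
  refine MeasurableSet.biInter (Set.to_countable _) fun i _ => ?_
  exact measurableSet_le (measurable_pi_apply i) measurable_const


/-- **Conditional p-value adjustment (calibration-conditional validity).**
Let `b 0 ≤ … ≤ b (n-1)` (in `[0,1]`) be such that, for `U_1, …, U_n` i.i.d. uniform on
`[0,1]` with order statistics `U_(1) ≤ … ≤ U_(n)`, one has
`P[U_(1) ≤ b 0, …, U_(n) ≤ b (n-1)] ≥ 1 − δ`.  Let `S 1, …, S n, T` be i.i.d. with law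
`ν` (here `S j = X j.castSucc` and `T = X (Fin.last n)`).  The marginal conformal
p-value of a test point `y` given calibration scores `s` is `(1 + #{i : s i ≤ y})/(n+1)`
and the adjusted p-value is `b_j` with `j = 1 + #{i : s i ≤ y}` (and `b_{n+1} = 1`).
Then, with probability at least `1 − δ` over the calibration scores, the conditional
law of the adjusted p-value given the calibration data — which, by independence, is the
`ν`-distribution of `y ↦ adjusted p-value of y` — is super-uniform simultaneously for
all thresholds `t ∈ (0,1)`. -/
theorem stmt8 {Ω : Type*} [MeasurableSpace Ω] (P : Measure Ω) [IsProbabilityMeasure P]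
    (n : ℕ) (hn : 1 ≤ n) (δ : ℝ) (hδ : δ ∈ Set.Ioo (0 : ℝ) 1)
    (b : Fin n → ℝ) (hb0 : ∀ i, 0 ≤ b i) (hb1 : ∀ i, b i ≤ 1) (hbmono : Monotone b)
    -- simultaneous upper confidence bound for the order statistics of `n` i.i.d.
    -- uniforms: `U_(i+1) = u (Tuple.sort u (i+1))` for `u` drawn from the product of
    -- uniform distributions on `[0,1]`
    (hband : ENNReal.ofReal (1 - δ) ≤
      (Measure.pi fun _ : Fin n => volume.restrict (Set.Icc (0 : ℝ) 1))
        {u : Fin n → ℝ | ∀ i : Fin n, u (Tuple.sort u i) ≤ b i})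
    (ν : Measure ℝ) [IsProbabilityMeasure ν]
    (X : Fin (n + 1) → Ω → ℝ)
    (hmeas : ∀ i, Measurable (X i))
    (hindep : iIndepFun X P)
    (hlaw : ∀ i, Measure.map (X i) P = ν) :
    ENNReal.ofReal (1 - δ) ≤
      P {ω | ∀ t ∈ Set.Ioo (0 : ℝ) 1,
        ν {y : ℝ |
          (if h : (Finset.univ.filter fun i : Fin n => X i.castSucc ω ≤ y).card < n
            then b ⟨(Finset.univ.filter fun i : Fin n => X i.castSucc ω ≤ y).card, h⟩
            else 1) ≤ t} ≤ ENNReal.ofReal t} := by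
  set uni : Measure ℝ := volume.restrict (Icc (0:ℝ) 1) with huni
  haveI huniprob : IsProbabilityMeasure uni := ⟨by
    rw [huni, Measure.restrict_apply_univ]; simp⟩
  set s : Ω → (Fin n → ℝ) := fun ω i => X i.castSucc ω with hs
  have hs_meas : Measurable s := measurable_pi_lambda _ fun i => hmeas _
  set E' : Set (Fin n → ℝ) :=
    {v | ∀ k : Fin n, ν (Iio (v (Tuple.sort v k))) ≤ ENNReal.ofReal (b k)} with hE'
  have hE'meas : MeasurableSet E' := by
    have hEq : E' = ⋂ k : Fin n, (fun v : Fin n → ℝ => v (Tuple.sort v k)) ⁻¹'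
        {x | ν (Iio x) ≤ ENNReal.ofReal (b k)} := by
      ext v; simp [hE']
    rw [hEq]
    refine MeasurableSet.iInter fun k => (ord_measurable k) ?_
    have hmono : Monotone fun x : ℝ => ν (Iio x) :=
      fun a c hac => measure_mono (Iio_subset_Iio hac)
    exact hmono.measurable measurableSet_Iic
  -- joint law of calibration scores is the product measure
  have hmap : Measure.map s P = Measure.pi (fun _ : Fin n => ν) := by
    refine (Measure.pi_eq (μ := fun _ : Fin n => ν) fun A hA => ?_).symm
    rw [Measure.map_apply hs_meas (MeasurableSet.univ_pi hA)]
    set B : Fin (n+1) → Set ℝ := Fin.snoc A Set.univ with hB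
    have hBmeas : ∀ i, MeasurableSet (B i) := by
      intro i
      induction i using Fin.lastCases with
      | last => simp [hB]
      | cast j => simpa [hB, Fin.snoc_castSucc] using hA j
    have hpre : s ⁻¹' Set.pi Set.univ A = ⋂ i, X i ⁻¹' B i := by
      ext ω
      simp only [mem_preimage, Set.mem_pi, Set.mem_univ, forall_true_left, mem_iInter, hs]
      constructor
      · intro h i
        induction i using Fin.lastCases with
        | last => simp [hB]
        | cast j => simpa [hB, Fin.snoc_castSucc] using h j
      · intro h j
        have := h j.castSucc
        simpa [hB, Fin.snoc_castSucc] using this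
    rw [hpre]
    rw [hindep.meas_iInter (fun i => ⟨B i, hBmeas i, rfl⟩)]
    rw [Fin.prod_univ_castSucc]
    have hlast : P (X (Fin.last n) ⁻¹' B (Fin.last n)) = 1 := by
      simp [hB, Fin.snoc_last]
    rw [hlast, mul_one]
    refine Finset.prod_congr rfl fun i _ => ?_
    have hBi : B i.castSucc = A i := Fin.snoc_castSucc _ _ _
    rw [hBi, ← hlaw i.castSucc, Measure.map_apply (hmeas _) (hA i)]
  -- measure-preserving quantile map
  have hQn : MeasurePreserving (fun u : Fin n → ℝ => fun i => Qf ν (u i))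
      (Measure.pi fun _ : Fin n => uni) (Measure.pi fun _ : Fin n => ν) :=
    measurePreserving_pi _ _ (fun _ => Qf_measurePreserving ν)
  -- the band event (intersected with the open cube) pulls back into E'
  have hbandsub : {u : Fin n → ℝ | ∀ i : Fin n, u (Tuple.sort u i) ≤ b i} ∩
      Set.pi Set.univ (fun _ : Fin n => Ioo (0:ℝ) 1) ⊆
      (fun u : Fin n → ℝ => fun i => Qf ν (u i)) ⁻¹' E' := by
    rintro u ⟨hub, hu01⟩
    simp only [mem_preimage, hE', mem_setOf_eq]
    intro k
    set w : Fin n → ℝ := fun i => Qf ν (u i) with hw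
    have hu : ∀ i, u i ∈ Ioo (0:ℝ) 1 := fun i => hu01 i (Set.mem_univ i)
    have husort : ∀ i, u (Tuple.sort u i) ∈ Ioo (0:ℝ) 1 := fun i => hu _
    have hwsort : w ∘ Tuple.sort u = fun i => sQ ν (u (Tuple.sort u i)) := by
      funext i
      have hcond := husort i
      simp only [hw, Function.comp_apply, Qf]
      split_ifs with h
      · rfl
      · exact absurd ⟨hcond.1, hcond.2⟩ h
    have hmono : Monotone (w ∘ Tuple.sort u) := by
      rw [hwsort]
      intro i j hij
      exact sQ_mono ν (husort i).1 (Tuple.monotone_sort u hij) (husort j).2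
    have huniq : w ∘ Tuple.sort w = w ∘ Tuple.sort u :=
      Tuple.unique_monotone (Tuple.monotone_sort w) hmono
    have hkey : w (Tuple.sort w k) = sQ ν (u (Tuple.sort u k)) := by
      have h1 := congrFun huniq k
      have h2 := congrFun hwsort k
      simpa using h1.trans h2
    show ν (Iio (w (Tuple.sort w k))) ≤ ENNReal.ofReal (b k)
    rw [hkey]
    exact (measure_Iio_sQ_le ν (husort k).1 (husort k).2).trans
      (ENNReal.ofReal_le_ofReal (hub k))
  -- the open cube has full measure
  have hcompl : (Measure.pi fun _ : Fin n => uni)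
      ((Set.pi Set.univ fun _ : Fin n => Ioo (0:ℝ) 1)ᶜ) = 0 := by
    have hIoo1 : (Measure.pi fun _ : Fin n => uni)
        (Set.pi Set.univ fun _ : Fin n => Ioo (0:ℝ) 1) = 1 := by
      rw [Measure.pi_pi]
      have h1 : uni (Ioo (0:ℝ) 1) = 1 := by
        rw [huni, Measure.restrict_apply' measurableSet_Icc,
          inter_eq_left.2 Ioo_subset_Icc_self, Real.volume_Ioo]
        simp
      simp [h1]
    rw [measure_compl (MeasurableSet.univ_pi fun _ => measurableSet_Ioo)
      (measure_ne_top _ _), hIoo1]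
    simp
  -- main chain
  have main : ENNReal.ofReal (1 - δ) ≤ P (s ⁻¹' E') := by
    calc ENNReal.ofReal (1 - δ)
        ≤ (Measure.pi fun _ : Fin n => uni)
            {u : Fin n → ℝ | ∀ i : Fin n, u (Tuple.sort u i) ≤ b i} := hband
      _ ≤ (Measure.pi fun _ : Fin n => uni)
            ({u : Fin n → ℝ | ∀ i : Fin n, u (Tuple.sort u i) ≤ b i} ∩
              Set.pi Set.univ (fun _ : Fin n => Ioo (0:ℝ) 1)) := by
          have hd := measure_le_inter_add_diff (Measure.pi fun _ : Fin n => uni)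
            {u : Fin n → ℝ | ∀ i : Fin n, u (Tuple.sort u i) ≤ b i}
            (Set.pi Set.univ (fun _ : Fin n => Ioo (0:ℝ) 1))
          have h0 : (Measure.pi fun _ : Fin n => uni)
              ({u : Fin n → ℝ | ∀ i : Fin n, u (Tuple.sort u i) ≤ b i} \
                Set.pi Set.univ (fun _ : Fin n => Ioo (0:ℝ) 1)) = 0 :=
            measure_mono_null (fun x hx => hx.2) hcompl
          simpa [h0] using hd
      _ ≤ (Measure.pi fun _ : Fin n => uni)
            ((fun u : Fin n → ℝ => fun i => Qf ν (u i)) ⁻¹' E') :=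
          measure_mono hbandsub
      _ = (Measure.pi fun _ : Fin n => ν) E' :=
          hQn.measure_preimage hE'meas.nullMeasurableSet
      _ = (Measure.map s P) E' := by rw [hmap]
      _ = P (s ⁻¹' E') := Measure.map_apply hs_meas hE'meas
  refine main.trans (measure_mono ?_)
  intro ω hω
  simp only [mem_preimage, hE', mem_setOf_eq] at hω
  simp only [mem_setOf_eq]
  intro t ht
  set v : Fin n → ℝ := fun i => X i.castSucc ω with hv
  by_cases hK : (Finset.univ.filter fun k : Fin n => b k ≤ t).Nonempty
  · set k := (Finset.univ.filter fun k : Fin n => b k ≤ t).max' hK with hk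
    have hbk : b k ≤ t :=
      (Finset.mem_filter.1 ((Finset.univ.filter fun k : Fin n => b k ≤ t).max'_mem hK)).2
    have hsubset : {y : ℝ |
        (if h : (Finset.univ.filter fun i : Fin n => X i.castSucc ω ≤ y).card < n
          then b ⟨(Finset.univ.filter fun i : Fin n => X i.castSucc ω ≤ y).card, h⟩
          else 1) ≤ t} ⊆ Iio (v (Tuple.sort v k)) := by
      intro y hy
      simp only [mem_setOf_eq] at hy
      by_cases hc : (Finset.univ.filter fun i : Fin n => X i.castSucc ω ≤ y).card < n
      · rw [dif_pos hc] at hy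
        have hmem : (⟨_, hc⟩ : Fin n) ∈ Finset.univ.filter fun k : Fin n => b k ≤ t :=
          Finset.mem_filter.2 ⟨Finset.mem_univ _, hy⟩
        have hle : (Finset.univ.filter fun i : Fin n => X i.castSucc ω ≤ y).card ≤ (k : ℕ) :=
          Finset.le_max' _ _ hmem
        simp only [mem_Iio]
        by_contra hcon
        push_neg at hcon
        have hlt := (ord_le_iff v k y).1 hcon
        have hcards : (Finset.univ.filter fun i : Fin n => v i ≤ y).card =
            (Finset.univ.filter fun i : Fin n => X i.castSucc ω ≤ y).card := rfl
        omega
      · rw [dif_neg hc] at hy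
        linarith [ht.2]
    calc ν {y : ℝ |
        (if h : (Finset.univ.filter fun i : Fin n => X i.castSucc ω ≤ y).card < n
          then b ⟨(Finset.univ.filter fun i : Fin n => X i.castSucc ω ≤ y).card, h⟩
          else 1) ≤ t}
        ≤ ν (Iio (v (Tuple.sort v k))) := measure_mono hsubset
      _ ≤ ENNReal.ofReal (b k) := hω k
      _ ≤ ENNReal.ofReal t := ENNReal.ofReal_le_ofReal hbk
  · have hempty : {y : ℝ |
        (if h : (Finset.univ.filter fun i : Fin n => X i.castSucc ω ≤ y).card < n
          then b ⟨(Finset.univ.filter fun i : Fin n => X i.castSucc ω ≤ y).card, h⟩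
          else 1) ≤ t} = ∅ := by
      ext y
      simp only [mem_setOf_eq, mem_empty_iff_false, iff_false]
      intro hy
      by_cases hc : (Finset.univ.filter fun i : Fin n => X i.castSucc ω ≤ y).card < n
      · rw [dif_pos hc] at hy
        exact hK ⟨⟨_, hc⟩, Finset.mem_filter.2 ⟨Finset.mem_univ _, hy⟩⟩
      · rw [dif_neg hc] at hy
        linarith [ht.2]
    rw [hempty]
    simp
end aux
end

section
/- Let n ≥ 1 and δ ∈ (0,1). Let U_1, …, U_n be i.i.d. uniform on [0,1] with order statistics U_(1) ≤ … ≤ U_(n), and let 0 ≤ b_1 ≤ b_2 ≤ … ≤ b_n ≤ 1 satisfy ℙ[ U_(1) ≤ b_1, …, U_(n) ≤ b_n ] ≥ 1 − δ; set b_{n+1} := 1. Let F be the CDF of a Borel probability measure on ℝ, let Z_1, …, Z_n be i.i.d. with CDF F, and let F̂_n(z) := (1/n) #{i : Z_i ≤ z} be the empirical CDF. Then ℙ[ F(z) ≤ b_{⌊n F̂_n(z)⌋ + 1} for all z ∈ ℝ ] ≥ 1 − δ (with the index capped at n+1, i.e., when F̂_n(z) = 1 the bound is b_{n+1} = 1).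 In particular, the function z ↦ b_{⌊n F̂_n(z)⌋+1} is a simultaneous (1−δ)-upper confidence band for the true CDF F. -/
open MeasureTheory ProbabilityTheory
open scoped Classical


private lemma le_measure_Iic_of_forall (μ : Measure ℝ) [IsFiniteMeasure μ] (x : ℝ) (c : ENNReal)
    (h : ∀ y, x < y → c ≤ μ (Set.Iio y)) : c ≤ μ (Set.Iic x) := by
  have hint : (⋂ k : ℕ, Set.Iio (x + 1/((k:ℝ)+1))) = Set.Iic x := by
    ext y
    simp only [Set.mem_iInter, Set.mem_Iio, Set.mem_Iic]
    constructor
    · intro hy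
      by_contra hxy
      push_neg at hxy
      obtain ⟨k, hk⟩ := exists_nat_one_div_lt (sub_pos.2 hxy)
      have := hy k
      linarith
    · intro hy k
      have h0 : (0:ℝ) < 1/((k:ℝ)+1) := by positivity
      linarith
  have htd := tendsto_measure_iInter_atTop (μ := μ)
      (s := fun k : ℕ => Set.Iio (x + 1/((k:ℝ)+1)))
      (fun k => measurableSet_Iio.nullMeasurableSet)
      (fun k m hkm => Set.Iio_subset_Iio (by
        have h1 : ((k:ℝ)+1) ≤ ((m:ℝ)+1) := by exact_mod_cast Nat.succ_le_succ hkm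
        have h2 : (1:ℝ)/((m:ℝ)+1) ≤ 1/((k:ℝ)+1) :=
          one_div_le_one_div_of_le (by positivity) h1
        linarith))
      ⟨0, measure_ne_top μ _⟩
  rw [hint] at htd
  refine ge_of_tendsto' htd fun k => h _ ?_
  have h9 : (0:ℝ) < 1/((k:ℝ)+1) := by positivity
  linarith

private lemma sort_le_iff {n : ℕ} (u : Fin n → ℝ) (t : ℝ) (i : Fin n) :
    u (Tuple.sort u i) ≤ t ↔ (i : ℕ) + 1 ≤ (Finset.univ.filter fun j => u j ≤ t).card := by
  set σ := Tuple.sort u with hσ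
  have hmono : Monotone (u ∘ σ) := Tuple.monotone_sort u
  have himg : (Finset.univ.filter fun j => u (σ j) ≤ t)
      = Finset.image (⇑σ.symm) (Finset.univ.filter fun j => u j ≤ t) := by
    ext j
    simp only [Finset.mem_filter, Finset.mem_image, Finset.mem_univ, true_and]
    constructor
    · intro h; exact ⟨σ j, h, Equiv.symm_apply_apply σ j⟩
    · rintro ⟨a, ha, rfl⟩
      simpa [Equiv.apply_symm_apply] using ha
  have hcard : (Finset.univ.filter fun j => u j ≤ t).card
      = (Finset.univ.filter fun j => u (σ j) ≤ t).card := by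
    rw [himg, Finset.card_image_of_injective _ σ.symm.injective]
  rw [hcard]
  constructor
  · intro h
    have hsub : Finset.Iic i ⊆ Finset.univ.filter fun j => u (σ j) ≤ t := by
      intro j hj
      refine Finset.mem_filter.2 ⟨Finset.mem_univ _, ?_⟩
      exact le_trans (hmono (Finset.mem_Iic.1 hj)) h
    calc (i:ℕ) + 1 = (Finset.Iic i).card := (Fin.card_Iic i).symm
      _ ≤ _ := Finset.card_le_card hsub
  · intro h
    by_contra hc
    push_neg at hc
    have hsub : (Finset.univ.filter fun j => u (σ j) ≤ t) ⊆ Finset.Iio i := by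
      intro j hj
      rw [Finset.mem_Iio]
      by_contra hij
      push_neg at hij
      exact absurd ((hmono hij).trans (Finset.mem_filter.1 hj).2) (not_le.2 hc)
    have hfin := (Finset.card_le_card hsub).trans_eq (Fin.card_Iio i)
    omega

private lemma key_measure (ν : Measure ℝ) [IsProbabilityMeasure ν] (t : ℝ)
    (ht : t ∈ Set.Icc (0:ℝ) 1) :
    ENNReal.ofReal t ≤ ν {z : ℝ | (ν (Set.Iio z)).toReal ≤ t} := by
  rcases eq_or_lt_of_le ht.1 with h0 | h0
  · simp [← h0]
  set Φ : ℝ → ℝ := fun z => (ν (Set.Iio z)).toReal with hΦ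
  have hΦmono : Monotone Φ := fun a c hac =>
    ENNReal.toReal_mono (measure_ne_top ν _) (measure_mono (Set.Iio_subset_Iio hac))
  set S : Set ℝ := {z | Φ z ≤ t} with hSdef
  by_cases hSc : ∀ z : ℝ, z ∈ S
  · rw [Set.eq_univ_of_forall hSc, measure_univ]
    exact ENNReal.ofReal_le_one.2 ht.2
  push_neg at hSc
  obtain ⟨w, hw⟩ := hSc
  have htop : Filter.Tendsto (fun k : ℕ => ν (Set.Iio (-(k:ℝ)))) Filter.atTop (nhds 0) := by
    have hint : (⋂ k : ℕ, Set.Iio (-(k:ℝ))) = ∅ := by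
      ext y
      simp only [Set.mem_iInter, Set.mem_Iio, Set.mem_empty_iff_false, iff_false]
      push_neg
      obtain ⟨k, hk⟩ := exists_nat_gt (-y)
      exact ⟨k, by linarith⟩
    have htd := tendsto_measure_iInter_atTop (μ := ν) (s := fun k : ℕ => Set.Iio (-(k:ℝ)))
      (fun k => measurableSet_Iio.nullMeasurableSet)
      (fun k m hkm => Set.Iio_subset_Iio (by exact_mod_cast neg_le_neg (Nat.cast_le.2 hkm)))
      ⟨0, measure_ne_top ν _⟩
    rw [hint, measure_empty] at htd
    exact htd
  have hpos : (0:ENNReal) < ENNReal.ofReal t := ENNReal.ofReal_pos.2 h0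
  obtain ⟨k, hk⟩ := ((tendsto_order.1 htop).2 _ hpos).exists
  have hkS : (-(k:ℝ)) ∈ S :=
    le_of_lt ((ENNReal.lt_ofReal_iff_toReal_lt (measure_ne_top ν _)).1 hk)
  have hSlower : ∀ a c : ℝ, a ≤ c → c ∈ S → a ∈ S := fun a c hac hcS =>
    le_trans (hΦmono hac) hcS
  have hbdd : BddBelow Sᶜ := ⟨-(k:ℝ), fun c hc => by
    by_contra hcon
    push_neg at hcon
    exact hc (hSlower c _ hcon.le hkS)⟩
  set z₀ := sInf Sᶜ with hz0
  have hScne : Set.Nonempty Sᶜ := ⟨w, hw⟩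
  have hupper : ∀ z, z₀ < z → z ∈ Sᶜ := by
    intro z hz
    obtain ⟨c, hcS, hcz⟩ := exists_lt_of_csInf_lt hScne hz
    intro hzS
    exact hcS (hSlower c z hcz.le hzS)
  by_cases hz0S : z₀ ∈ S
  · have hsub : Set.Iic z₀ ⊆ S := fun z hz => hSlower z z₀ hz hz0S
    refine le_trans ?_ (measure_mono hsub)
    apply le_measure_Iic_of_forall
    intro y hy
    have hyc : ¬ Φ y ≤ t := hupper y hy
    exact le_of_lt ((ENNReal.ofReal_lt_iff_lt_toReal ht.1 (measure_ne_top ν _)).2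
      (lt_of_not_ge hyc))
  · have h1 : ENNReal.ofReal t ≤ ν (Set.Iio z₀) :=
      le_of_lt ((ENNReal.ofReal_lt_iff_lt_toReal ht.1 (measure_ne_top ν _)).2
        (lt_of_not_ge hz0S))
    refine h1.trans (measure_mono ?_)
    intro z hz
    by_contra hzS
    exact absurd (csInf_le hbdd hzS) (not_le.2 hz)

private lemma exists_quantile (μ : Measure ℝ) [IsProbabilityMeasure μ]
    (h1 : μ (Set.Iic 1) = 1) (h0 : ∀ x : ℝ, x < 0 → μ (Set.Iic x) = 0)
    (hk : ∀ t ∈ Set.Icc (0:ℝ) 1, ENNReal.ofReal t ≤ μ (Set.Iic t)) :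
    ∃ g : ℝ → ℝ, MeasurePreserving g (volume.restrict (Set.Icc (0:ℝ) 1)) μ ∧
      ∀ t ∈ Set.Ioc (0:ℝ) 1, g t ≤ t := by
  set F : ℝ → ℝ := fun x => (μ (Set.Iic x)).toReal with hF
  have hFmono : Monotone F := fun x y hxy =>
    ENNReal.toReal_mono (measure_ne_top μ _) (measure_mono (Set.Iic_subset_Iic.2 hxy))
  have hF1 : F 1 = 1 := by simp [hF, h1]
  set S : ℝ → Set ℝ := fun t => {x | x ∈ Set.Icc (0:ℝ) 1 ∧ min t 1 ≤ F x} with hS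
  have h1S : ∀ t, 1 ∈ S t := fun t =>
    ⟨⟨zero_le_one, le_refl 1⟩, by rw [hF1]; exact min_le_right _ _⟩
  have hbdd : ∀ t, BddBelow (S t) := fun t => ⟨0, fun x hx => hx.1.1⟩
  set g : ℝ → ℝ := fun t => sInf (S t) with hg
  have hg0 : ∀ t, 0 ≤ g t := fun t => le_csInf ⟨1, h1S t⟩ fun x hx => hx.1.1
  have hg1 : ∀ t, g t ≤ 1 := fun t => csInf_le (hbdd t) (h1S t)
  have hgmono : Monotone g := fun t t' htt' =>
    csInf_le_csInf (hbdd t) ⟨1, h1S t'⟩ fun x hx => ⟨hx.1, le_trans (min_le_min htt' le_rfl) hx.2⟩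
  have hgmeas : Measurable g := hgmono.measurable
  have hgle : ∀ t x : ℝ, x ∈ Set.Icc (0:ℝ) 1 → t ≤ F x → g t ≤ x :=
    fun t x hx hFx => csInf_le (hbdd t) ⟨hx, (min_le_left t 1).trans hFx⟩
  have hconv : ∀ t ∈ Set.Ioc (0:ℝ) 1, ∀ x : ℝ, g t ≤ x → ENNReal.ofReal t ≤ μ (Set.Iic x) := by
    intro t ht x hgx
    apply le_measure_Iic_of_forall
    intro y hxy
    obtain ⟨s, hsS, hsy⟩ := exists_lt_of_csInf_lt ⟨1, h1S t⟩ (lt_of_le_of_lt hgx hxy)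
    have hts : t ≤ F s := by
      have := hsS.2
      rwa [min_eq_left ht.2] at this
    have hle : ENNReal.ofReal t ≤ μ (Set.Iic s) :=
      calc ENNReal.ofReal t ≤ ENNReal.ofReal (F s) := ENNReal.ofReal_le_ofReal hts
        _ = μ (Set.Iic s) := ENNReal.ofReal_toReal (measure_ne_top μ _)
    exact hle.trans (measure_mono fun v hv => lt_of_le_of_lt hv hsy)
  have hgletop : ∀ t ∈ Set.Ioc (0:ℝ) 1, g t ≤ t := by
    intro t ht
    apply hgle t t ⟨ht.1.le, ht.2⟩
    have h2 := ENNReal.toReal_mono (measure_ne_top μ _) (hk t ⟨ht.1.le, ht.2⟩)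
    rwa [ENNReal.toReal_ofReal ht.1.le] at h2
  refine ⟨g, ⟨hgmeas, ?_⟩, hgletop⟩
  haveI hprob : IsProbabilityMeasure (volume.restrict (Set.Icc (0:ℝ) 1)) :=
    ⟨by simp [Real.volume_Icc]⟩
  haveI hmapprob : IsProbabilityMeasure
      (Measure.map g (volume.restrict (Set.Icc (0:ℝ) 1))) :=
    Measure.isProbabilityMeasure_map hgmeas.aemeasurable
  refine Measure.ext_of_Iic _ _ (fun x => ?_)
  rw [Measure.map_apply hgmeas measurableSet_Iic,
      Measure.restrict_apply (hgmeas measurableSet_Iic)]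
  rcases le_or_gt 1 x with hx1 | hx1
  · have hfull : g ⁻¹' Set.Iic x ∩ Set.Icc 0 1 = Set.Icc 0 1 :=
      Set.inter_eq_right.2 fun t _ => le_trans (hg1 t) hx1
    rw [hfull, Real.volume_Icc]
    have hμx : μ (Set.Iic x) = 1 :=
      le_antisymm prob_le_one (h1 ▸ measure_mono (Set.Iic_subset_Iic.2 hx1))
    rw [hμx]
    norm_num
  rcases lt_or_ge x 0 with hx0 | hx0
  · have hempty : g ⁻¹' Set.Iic x ∩ Set.Icc 0 1 = ∅ := by
      ext t
      simp only [Set.mem_inter_iff, Set.mem_preimage, Set.mem_Iic, Set.mem_Icc,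
        Set.mem_empty_iff_false, iff_false, not_and]
      intro hgt
      exact absurd (le_trans (hg0 t) hgt) (not_le.2 hx0)
    rw [hempty, h0 x hx0, measure_empty]
  · set c := F x with hc
    have hc0 : 0 ≤ c := ENNReal.toReal_nonneg
    have hc1 : c ≤ 1 := by
      have hle := ENNReal.toReal_mono ENNReal.one_ne_top (prob_le_one (μ := μ) (s := Set.Iic x))
      simpa using hle
    have hsub1 : Set.Ioc 0 c ⊆ g ⁻¹' Set.Iic x ∩ Set.Icc 0 1 := by
      intro t ht
      exact ⟨hgle t x ⟨hx0, hx1.le⟩ ht.2, ht.1.le, ht.2.trans hc1⟩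
    have hsub2 : g ⁻¹' Set.Iic x ∩ Set.Icc 0 1 ⊆ Set.Ioc 0 c ∪ {0} := by
      rintro t ⟨htg, ht0, ht1⟩
      rcases eq_or_lt_of_le ht0 with h | h
      · exact Or.inr h.symm
      · left
        refine ⟨h, ?_⟩
        have h2 := ENNReal.toReal_mono (measure_ne_top μ _) (hconv t ⟨h, ht1⟩ x htg)
        rwa [ENNReal.toReal_ofReal h.le] at h2
    have hv1 : ENNReal.ofReal c ≤ volume (g ⁻¹' Set.Iic x ∩ Set.Icc 0 1) := by
      have := measure_mono (μ := volume) hsub1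
      rwa [Real.volume_Ioc, sub_zero] at this
    have hv2 : volume (g ⁻¹' Set.Iic x ∩ Set.Icc 0 1) ≤ ENNReal.ofReal c := by
      calc volume (g ⁻¹' Set.Iic x ∩ Set.Icc 0 1) ≤ volume (Set.Ioc 0 c ∪ {0}) :=
            measure_mono hsub2
        _ ≤ volume (Set.Ioc 0 c) + volume ({0} : Set ℝ) := measure_union_le _ _
        _ = ENNReal.ofReal c := by
            rw [Real.volume_Ioc, Real.volume_singleton, add_zero, sub_zero]
    rw [le_antisymm hv2 hv1, hc, ENNReal.ofReal_toReal (measure_ne_top μ _)]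

/-- **Simultaneous upper confidence band for the CDF.**
Let `b 0 ≤ … ≤ b (n-1)` (in `[0,1]`) be such that, for `U_1, …, U_n` i.i.d. uniform on
`[0,1]` with order statistics `U_(1) ≤ … ≤ U_(n)`, one has
`P[U_(1) ≤ b 0, …, U_(n) ≤ b (n-1)] ≥ 1 − δ`.  Let `Z_1, …, Z_n` be i.i.d. with law `ν`
and CDF `F(z) = ν(Iic z)`, and let `F̂_n(z) = #{i : Z_i ≤ z}/n` be the empirical CDF.
Then with probability at least `1 − δ`, `F(z) ≤ b_{⌊n F̂_n(z)⌋ + 1}` for all `z ∈ ℝ`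
(with `b_{n+1} = 1`, i.e. the index capped at `n+1`); here
`⌊n F̂_n(z)⌋ = #{i : Z_i ≤ z}`. -/
theorem stmt9 {Ω : Type*} [MeasurableSpace Ω] (P : Measure Ω) [IsProbabilityMeasure P]
    (n : ℕ) (hn : 1 ≤ n) (δ : ℝ) (hδ : δ ∈ Set.Ioo (0 : ℝ) 1)
    (b : Fin n → ℝ) (hb0 : ∀ i, 0 ≤ b i) (hb1 : ∀ i, b i ≤ 1) (hbmono : Monotone b)
    -- simultaneous upper confidence bound for the order statistics of `n` i.i.d.
    -- uniforms: `U_(i+1) = u (Tuple.sort u (i+1))` for `u` drawn from the product of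
    -- uniform distributions on `[0,1]`
    (hband : ENNReal.ofReal (1 - δ) ≤
      (Measure.pi fun _ : Fin n => volume.restrict (Set.Icc (0 : ℝ) 1))
        {u : Fin n → ℝ | ∀ i : Fin n, u (Tuple.sort u i) ≤ b i})
    (ν : Measure ℝ) [IsProbabilityMeasure ν]
    (Z : Fin n → Ω → ℝ)
    (hmeas : ∀ i, Measurable (Z i))
    (hindep : iIndepFun Z P)
    (hlaw : ∀ i, Measure.map (Z i) P = ν) :
    ENNReal.ofReal (1 - δ) ≤
      P {ω | ∀ z : ℝ,
        (ν (Set.Iic z)).toReal ≤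
          (if h : (Finset.univ.filter fun i : Fin n => Z i ω ≤ z).card < n
            then b ⟨(Finset.univ.filter fun i : Fin n => Z i ω ≤ z).card, h⟩
            else 1)} := by
  classical
  set Φ : ℝ → ℝ := fun z => (ν (Set.Iio z)).toReal with hΦdef
  have hΦmono : Monotone Φ := fun a c hac =>
    ENNReal.toReal_mono (measure_ne_top ν _) (measure_mono (Set.Iio_subset_Iio hac))
  have hΦmeas : Measurable Φ := hΦmono.measurable
  have hΦ0 : ∀ z, 0 ≤ Φ z := fun z => ENNReal.toReal_nonneg
  have hΦ1 : ∀ z, Φ z ≤ 1 := by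
    intro z
    have hle := ENNReal.toReal_mono ENNReal.one_ne_top (prob_le_one (μ := ν) (s := Set.Iio z))
    simpa using hle
  set μ : Measure ℝ := Measure.map Φ ν with hμdef
  haveI : IsProbabilityMeasure μ := Measure.isProbabilityMeasure_map hΦmeas.aemeasurable
  have hμIic : ∀ x : ℝ, μ (Set.Iic x) = ν (Φ ⁻¹' Set.Iic x) := fun x =>
    Measure.map_apply hΦmeas measurableSet_Iic
  have hμ1 : μ (Set.Iic 1) = 1 := by
    rw [hμIic]
    have huniv : Φ ⁻¹' Set.Iic 1 = Set.univ := Set.eq_univ_of_forall fun z => hΦ1 z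
    rw [huniv, measure_univ]
  have hμ0 : ∀ x : ℝ, x < 0 → μ (Set.Iic x) = 0 := by
    intro x hx
    rw [hμIic]
    have hem : Φ ⁻¹' Set.Iic x = ∅ := by
      ext z
      simp only [Set.mem_preimage, Set.mem_Iic, Set.mem_empty_iff_false, iff_false, not_le]
      exact lt_of_lt_of_le hx (hΦ0 z)
    rw [hem, measure_empty]
  have hμk : ∀ t ∈ Set.Icc (0:ℝ) 1, ENNReal.ofReal t ≤ μ (Set.Iic t) := by
    intro t htm
    rw [hμIic]
    exact key_measure ν t htm
  obtain ⟨g, hgMP, hgle⟩ := exists_quantile μ hμ1 hμ0 hμk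
  set A : Set (Fin n → ℝ) :=
    {w | ∀ i : Fin n, (i:ℕ) + 1 ≤ (Finset.univ.filter fun j => w j ≤ b i).card} with hAdef
  have hA : MeasurableSet A := by
    have hAeq : A = ⋂ i : Fin n,
        {w : Fin n → ℝ | (i:ℕ) + 1 ≤ (Finset.univ.filter fun j => w j ≤ b i).card} := by
      ext w; simp [hAdef, Set.mem_iInter]
    rw [hAeq]
    refine MeasurableSet.iInter fun i => ?_
    have heq : {w : Fin n → ℝ | (i:ℕ) + 1 ≤ (Finset.univ.filter fun j => w j ≤ b i).card}
        = ⋃ (s : Finset (Fin n)) (_ : (i:ℕ) + 1 ≤ s.card),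
            ⋂ j ∈ s, {w : Fin n → ℝ | w j ≤ b i} := by
      ext w
      simp only [Set.mem_setOf_eq, Set.mem_iUnion, Set.mem_iInter]
      constructor
      · intro h
        exact ⟨Finset.univ.filter fun j => w j ≤ b i, h,
          fun j hj => (Finset.mem_filter.1 hj).2⟩
      · rintro ⟨s, hs, h⟩
        exact hs.trans (Finset.card_le_card fun j hj =>
          Finset.mem_filter.2 ⟨Finset.mem_univ _, h j hj⟩)
    rw [heq]
    refine MeasurableSet.iUnion fun s => MeasurableSet.iUnion fun _ => ?_
    exact MeasurableSet.biInter (Set.to_countable _) fun j _ =>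
      measurableSet_le (measurable_pi_apply j) measurable_const
  set unif : Measure ℝ := volume.restrict (Set.Icc (0:ℝ) 1) with hunif
  set π : Measure (Fin n → ℝ) := Measure.pi fun _ : Fin n => unif with hπ
  have hBA : {u : Fin n → ℝ | ∀ i : Fin n, u (Tuple.sort u i) ≤ b i} = A := by
    ext u
    simp only [Set.mem_setOf_eq, hAdef]
    exact forall_congr' fun i => sort_le_iff u (b i) i
  have h1 : ENNReal.ofReal (1 - δ) ≤ π A := hBA ▸ hband
  haveI : IsProbabilityMeasure unif := ⟨by simp [hunif, Real.volume_Icc]⟩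
  have hGMP : MeasurePreserving (fun (u : Fin n → ℝ) i => g (u i)) π
      (Measure.pi fun _ : Fin n => μ) :=
    measurePreserving_pi _ _ (fun _ => hgMP)
  have hnull : π {u : Fin n → ℝ | ¬ ∀ i, u i ∈ Set.Ioc (0:ℝ) 1} = 0 := by
    have hsub : {u : Fin n → ℝ | ¬ ∀ i, u i ∈ Set.Ioc (0:ℝ) 1}
        ⊆ ⋃ i : Fin n, Function.eval i ⁻¹' (Set.Ioc (0:ℝ) 1)ᶜ := by
      intro u hu
      push_neg at hu
      obtain ⟨i, hi⟩ := hu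
      exact Set.mem_iUnion.2 ⟨i, hi⟩
    refine measure_mono_null hsub
      (measure_iUnion_null fun i => Measure.pi_eval_preimage_null _ ?_)
    rw [hunif, Measure.restrict_apply measurableSet_Ioc.compl]
    have hsing : (Set.Ioc (0:ℝ) 1)ᶜ ∩ Set.Icc 0 1 = {0} := by
      ext x
      simp only [Set.mem_inter_iff, Set.mem_compl_iff, Set.mem_Ioc, Set.mem_Icc,
        Set.mem_singleton_iff, not_and, not_le]
      constructor
      · rintro ⟨hq, h2, h3⟩
        by_contra hx
        have := hq (lt_of_le_of_ne h2 (Ne.symm hx))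
        linarith
      · rintro rfl
        exact ⟨fun h => absurd h (lt_irrefl 0), le_refl 0, zero_le_one⟩
    rw [hsing, Real.volume_singleton]
  have h2 : π A ≤ π ((fun (u : Fin n → ℝ) i => g (u i)) ⁻¹' A) := by
    apply measure_mono_ae
    rw [MeasureTheory.ae_le_set]
    refine measure_mono_null ?_ hnull
    rintro u ⟨huA, huG⟩ hgood
    apply huG
    intro i
    refine le_trans (huA i) (Finset.card_le_card ?_)
    intro j hj
    exact Finset.mem_filter.2 ⟨Finset.mem_univ _,
      le_trans (hgle (u j) (hgood j)) (Finset.mem_filter.1 hj).2⟩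
  have h3 : π ((fun (u : Fin n → ℝ) i => g (u i)) ⁻¹' A)
      = (Measure.pi fun _ : Fin n => μ) A :=
    hGMP.measure_preimage hA.nullMeasurableSet
  set Wmap : Ω → (Fin n → ℝ) := fun ω i => Φ (Z i ω) with hWdef
  have hWmeas : Measurable Wmap := measurable_pi_iff.2 fun i => hΦmeas.comp (hmeas i)
  have hlawW : Measure.map Wmap P = Measure.pi fun _ : Fin n => μ := by
    refine (Measure.pi_eq fun s hs => ?_).symm
    rw [Measure.map_apply hWmeas (MeasurableSet.univ_pi hs)]
    have hpre : Wmap ⁻¹' Set.pi Set.univ s = ⋂ i, Z i ⁻¹' (Φ ⁻¹' s i) := by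
      ext ω
      simp [hWdef, Set.mem_pi]
    rw [hpre, hindep.meas_iInter (fun i => ⟨Φ ⁻¹' s i, hΦmeas (hs i), rfl⟩)]
    refine Finset.prod_congr rfl fun i _ => ?_
    rw [← Measure.map_apply (hmeas i) (hΦmeas (hs i)), hlaw i, hμdef,
        Measure.map_apply hΦmeas (hs i)]
  have h4 : (Measure.pi fun _ : Fin n => μ) A = P (Wmap ⁻¹' A) := by
    rw [← hlawW, Measure.map_apply hWmeas hA]
  have h5 : Wmap ⁻¹' A ⊆ {ω | ∀ z : ℝ, (ν (Set.Iic z)).toReal ≤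
      (if h : (Finset.univ.filter fun i : Fin n => Z i ω ≤ z).card < n
        then b ⟨(Finset.univ.filter fun i : Fin n => Z i ω ≤ z).card, h⟩ else 1)} := by
    intro ω hω z
    by_cases h : (Finset.univ.filter fun i : Fin n => Z i ω ≤ z).card < n
    · rw [dif_pos h]
      set i : Fin n := ⟨(Finset.univ.filter fun i : Fin n => Z i ω ≤ z).card, h⟩ with hi
      have hcard := hω i
      by_contra hcon
      push_neg at hcon
      have hsub : (Finset.univ.filter fun j => Wmap ω j ≤ b i)
          ⊆ Finset.univ.filter fun j : Fin n => Z j ω ≤ z := by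
        intro j hj
        refine Finset.mem_filter.2 ⟨Finset.mem_univ _, ?_⟩
        by_contra hz
        push_neg at hz
        have h6 : (ν (Set.Iic z)).toReal ≤ Φ (Z j ω) :=
          ENNReal.toReal_mono (measure_ne_top ν _)
            (measure_mono fun v hv => lt_of_le_of_lt hv hz)
        have h7 : Φ (Z j ω) ≤ b i := (Finset.mem_filter.1 hj).2
        linarith
      have h8 : (Finset.univ.filter fun i : Fin n => Z i ω ≤ z).card + 1
          ≤ (Finset.univ.filter fun i : Fin n => Z i ω ≤ z).card :=
        hcard.trans (Finset.card_le_card hsub)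
      omega
    · rw [dif_neg h]
      have hle := ENNReal.toReal_mono ENNReal.one_ne_top (prob_le_one (μ := ν) (s := Set.Iic z))
      simpa using hle
  calc ENNReal.ofReal (1 - δ) ≤ π A := h1
    _ ≤ π ((fun (u : Fin n → ℝ) i => g (u i)) ⁻¹' A) := h2
    _ = (Measure.pi fun _ : Fin n => μ) A := h3
    _ = P (Wmap ⁻¹' A) := h4
    _ ≤ P _ := measure_mono h5
end

section
/- Fix δ ∈ (0,1) and ζ ∈ (0,1). For n ≥ 1, let k := ⌈ζ n⌉ and define the Simes adjustment sequence b^s_j for j = 1, …, n+1 by: b^s_j := 1 − δ^{1/k} ( Π_{ℓ=n−k+1}^{n} (ℓ − j + 1)/ℓ )^{1/k} if 1 ≤ j ≤ n−k+1, and b^s_j := 1 if j > n−k+1. Then there exist a constant C > 0 and an integer n₀ (both depending only on δ and ζ) such that for all n ≥ n₀: (1/(n+1)) Σ_{j=1}^{n+1} (−log b^s_j) ≤ 1 − ζ − (1−ζ) log(1−ζ) + C (log n)/n. -/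
set_option maxHeartbeats 1000000

private lemma sumlog (L : ℝ) : ∀ a : ℕ, ∑ i ∈ Finset.Icc 1 a, (L - Real.log i) ≤ a * (1 + L - Real.log a) := by
  intro a
  induction a with
  | zero => simp
  | succ a ih =>
    rw [Finset.sum_Icc_succ_top (by omega)]
    have key : (a : ℝ) * (Real.log (a+1) - Real.log a) ≤ 1 := by
      rcases Nat.eq_zero_or_pos a with h | h
      · simp [h]
      · have ha : (1:ℝ) ≤ a := by exact_mod_cast h
        have h1 : Real.log (((a:ℝ)+1)/a) ≤ ((a:ℝ)+1)/a - 1 :=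
          Real.log_le_sub_one_of_pos (by positivity)
        rw [Real.log_div (by linarith) (by linarith)] at h1
        have h2 : ((a:ℝ)+1)/a - 1 = 1/a := by field_simp; ring
        rw [h2] at h1
        have : (a:ℝ) * (Real.log (a+1) - Real.log a) ≤ (a:ℝ) * (1/a) := by
          apply mul_le_mul_of_nonneg_left h1 (by linarith)
        rw [mul_one_div, div_self (by linarith)] at this
        exact this
    push_cast
    nlinarith [ih]


private lemma gmono (N a b : ℝ) (ha : 0 < a) (hab : a ≤ b) (hbn : b ≤ N) :
    a * (1 + Real.log N - Real.log a) ≤ b * (1 + Real.log N - Real.log b) := by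
  have hb : 0 < b := lt_of_lt_of_le ha hab
  have h1 : Real.log (b/a) ≤ b/a - 1 := Real.log_le_sub_one_of_pos (by positivity)
  rw [Real.log_div (by linarith) (by linarith)] at h1
  have h2 : Real.log b ≤ Real.log N := Real.log_le_log hb hbn
  have hba : a * (b/a) = b := by field_simp
  have h1' : a * (Real.log b - Real.log a) ≤ b - a := by
    have := mul_le_mul_of_nonneg_left h1 ha.le
    nlinarith
  nlinarith [mul_nonneg (sub_nonneg.mpr hab) (sub_nonneg.mpr h2)]




/-- The Simes adjustment sequence with parameter `k = ⌈ζ n⌉`: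
`b^s_j = 1 − δ^{1/k} (Π_{ℓ=n−k+1}^{n} (ℓ−j+1)/ℓ)^{1/k}` for `1 ≤ j ≤ n−k+1`, and
`b^s_j = 1` for `j > n−k+1`. -/
noncomputable def simesAdj (δ ζ : ℝ) (n j : ℕ) : ℝ :=
  if j ≤ n - Nat.ceil (ζ * n) + 1 then
    1 - δ ^ ((1 : ℝ) / (Nat.ceil (ζ * n) : ℝ)) *
      (∏ l ∈ Finset.Icc (n - Nat.ceil (ζ * n) + 1) n, (((l : ℝ) - (j : ℝ) + 1) / (l : ℝ))) ^
        ((1 : ℝ) / (Nat.ceil (ζ * n) : ℝ))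
  else 1

private lemma simes_lb (δ ζ : ℝ) (hδ0 : 0 < δ) (hδ1 : δ < 1) (hζ0 : 0 < ζ) (hζ1 : ζ < 1)
    (n j : ℕ) (hn : 1 ≤ n) (hj1 : 1 ≤ j) (hjm : j ≤ n - Nat.ceil (ζ * n) + 1) :
    ((j:ℝ)-1)/n ≤ simesAdj δ ζ n j ∧ (1-δ)/(Nat.ceil (ζ * n) : ℝ) ≤ simesAdj δ ζ n j := by
  set k := Nat.ceil (ζ * n) with hk
  have hk1 : 1 ≤ k := Nat.ceil_pos.mpr (by positivity)
  have hkn : k ≤ n := by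
    apply Nat.ceil_le.mpr
    calc ζ * n ≤ 1 * n := by apply mul_le_mul_of_nonneg_right hζ1.le (by positivity)
    _ = (n:ℝ) := by ring
  have hk0 : k ≠ 0 := by omega
  have hkR : (0:ℝ) < k := by exact_mod_cast hk1
  have hnR : (0:ℝ) < n := by exact_mod_cast hn
  have hjn : j ≤ n := by omega
  have hjR : (1:ℝ) ≤ j := by exact_mod_cast hj1
  have hjnR : (j:ℝ) ≤ n := by exact_mod_cast hjn
  rw [simesAdj, if_pos hjm]
  set P := ∏ l ∈ Finset.Icc (n - k + 1) n, (((l : ℝ) - (j : ℝ) + 1) / (l : ℝ)) with hP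
  set c : ℝ := ((n:ℝ) - j + 1)/n with hc
  have hc0 : 0 ≤ c := by rw [hc]; apply div_nonneg (by linarith) hnR.le
  have hfact : ∀ l ∈ Finset.Icc (n - k + 1) n,
      0 ≤ ((l : ℝ) - (j : ℝ) + 1) / (l : ℝ) ∧ ((l : ℝ) - (j : ℝ) + 1) / (l : ℝ) ≤ c
        ∧ ((l : ℝ) - (j : ℝ) + 1) / (l : ℝ) ≤ 1 := by
    intro l hl
    simp only [Finset.mem_Icc] at hl
    have hjl : j ≤ l := by omega
    have hl1 : 1 ≤ l := by omega
    have hlR : (1:ℝ) ≤ l := by exact_mod_cast hl1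
    have hjlR : (j:ℝ) ≤ l := by exact_mod_cast hjl
    have hlnR : (l:ℝ) ≤ n := by exact_mod_cast hl.2
    refine ⟨div_nonneg (by linarith) (by linarith), ?_, ?_⟩
    · rw [hc, div_le_div_iff₀ (by linarith) hnR]
      nlinarith
    · rw [div_le_one (by linarith)]; linarith
  have hcard : (Finset.Icc (n - k + 1) n).card = k := by
    rw [Nat.card_Icc]; omega
  have hP0 : 0 ≤ P := Finset.prod_nonneg (fun l hl => (hfact l hl).1)
  have hP1 : P ≤ 1 := Finset.prod_le_one (fun l hl => (hfact l hl).1) (fun l hl => (hfact l hl).2.2)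
  have hPc : P ≤ c ^ k := by
    calc P ≤ ∏ l ∈ Finset.Icc (n - k + 1) n, c :=
          Finset.prod_le_prod (fun l hl => (hfact l hl).1) (fun l hl => (hfact l hl).2.1)
    _ = c ^ k := by rw [Finset.prod_const, hcard]
  have hexp0 : (0:ℝ) ≤ 1/(k:ℝ) := by positivity
  have hδr0 : 0 ≤ δ ^ ((1:ℝ)/k) := Real.rpow_nonneg hδ0.le _
  have hδr1 : δ ^ ((1:ℝ)/k) ≤ 1 := Real.rpow_le_one hδ0.le hδ1.le hexp0
  have hPr0 : 0 ≤ P ^ ((1:ℝ)/k) := Real.rpow_nonneg hP0 _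
  have hPrc : P ^ ((1:ℝ)/k) ≤ c := by
    calc P ^ ((1:ℝ)/k) ≤ (c ^ k) ^ ((1:ℝ)/k) := Real.rpow_le_rpow hP0 hPc hexp0
    _ = c := by rw [one_div]; exact Real.pow_rpow_inv_natCast hc0 hk0
  have hPr1 : P ^ ((1:ℝ)/k) ≤ 1 := Real.rpow_le_one hP0 hP1 hexp0
  constructor
  · have h1 : δ ^ ((1:ℝ)/k) * P ^ ((1:ℝ)/k) ≤ 1 * c := by
      apply mul_le_mul hδr1 hPrc hPr0 zero_le_one
    have h2 : 1 - 1 * c = ((j:ℝ)-1)/n := by rw [hc]; field_simp; ring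
    linarith
  · have h1 : δ ^ ((1:ℝ)/k) * P ^ ((1:ℝ)/k) ≤ δ ^ ((1:ℝ)/k) * 1 := by
      apply mul_le_mul_of_nonneg_left hPr1 hδr0
    have hxk : (δ ^ ((1:ℝ)/k)) ^ k = δ := by
      rw [one_div]; exact Real.rpow_inv_natCast_pow hδ0.le hk0
    have hber := one_add_mul_le_pow (show (-2:ℝ) ≤ δ ^ ((1:ℝ)/k) - 1 by linarith) k
    rw [show (1 + (δ ^ ((1:ℝ)/k) - 1)) = δ ^ ((1:ℝ)/k) by ring] at hber
    rw [hxk] at hber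
    have : (1-δ)/(k:ℝ) ≤ 1 - δ ^ ((1:ℝ)/k) := by
      rw [div_le_iff₀ hkR]; nlinarith
    linarith

/-- **Mean of Fisher's combination statistic under the Simes adjustment.**
For fixed `δ ∈ (0,1)` and `ζ ∈ (0,1)`, with `k = ⌈ζ n⌉`, there are `C > 0` and `n₀`
(depending only on `δ` and `ζ`) such that for all `n ≥ n₀`,
`(1/(n+1)) Σ_{j=1}^{n+1} (−log b^s_j) ≤ 1 − ζ − (1−ζ) log(1−ζ) + C (log n)/n`. -/
theorem stmt14 (δ ζ : ℝ) (hδ : δ ∈ Set.Ioo (0 : ℝ) 1) (hζ : ζ ∈ Set.Ioo (0 : ℝ) 1) :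
    ∃ C : ℝ, 0 < C ∧ ∃ n₀ : ℕ, ∀ n : ℕ, n₀ ≤ n →
      (1 / ((n : ℝ) + 1)) * (∑ j ∈ Finset.Icc 1 (n + 1), -Real.log (simesAdj δ ζ n j)) ≤
        1 - ζ - (1 - ζ) * Real.log (1 - ζ) + C * Real.log n / n := by
  obtain ⟨hδ0, hδ1⟩ := hδ
  obtain ⟨hζ0, hζ1⟩ := hζ
  refine ⟨2, by norm_num, Nat.ceil (2/(1-ζ)) + Nat.ceil (1/(1-δ)) + 3, fun n hn => ?_⟩
  have hn3 : 3 ≤ n := by omega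
  have hn1 : 1 ≤ n := by omega
  have hnR : (0:ℝ) < n := by exact_mod_cast hn1
  have hnζ : 2/(1-ζ) ≤ (n:ℝ) := by
    calc 2/(1-ζ) ≤ (Nat.ceil (2/(1-ζ)) : ℝ) := Nat.le_ceil _
    _ ≤ (n:ℝ) := by exact_mod_cast Nat.le_of_lt_succ (by omega)
  have hnδ : 1/(1-δ) ≤ (n:ℝ) := by
    calc 1/(1-δ) ≤ (Nat.ceil (1/(1-δ)) : ℝ) := Nat.le_ceil _
    _ ≤ (n:ℝ) := by exact_mod_cast Nat.le_of_lt_succ (by omega)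
  set k := Nat.ceil (ζ * (n:ℕ)) with hkdef
  have hk1 : 1 ≤ k := Nat.ceil_pos.mpr (by positivity)
  have hkn : k ≤ n := by
    apply Nat.ceil_le.mpr
    calc ζ * n ≤ 1 * n := mul_le_mul_of_nonneg_right hζ1.le (by positivity)
    _ = (n:ℝ) := by ring
  have hkR : (0:ℝ) < k := by exact_mod_cast hk1
  set m := n - k + 1 with hmdef
  have hmn : m ≤ n := by omega
  -- size of a = n - k
  have hkup : (k:ℝ) < ζ * n + 1 := Nat.ceil_lt_add_one (by positivity)
  have hklow : ζ * n ≤ (k:ℝ) := Nat.le_ceil _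
  have haR : ((n - k : ℕ) : ℝ) = (n:ℝ) - k := by
    rw [Nat.cast_sub hkn]
  have h2ζ : (2:ℝ) ≤ (1-ζ)*n := by
    have := mul_le_mul_of_nonneg_right hnζ (by linarith : (0:ℝ) ≤ 1-ζ)
    rw [div_mul_cancel₀ _ (by linarith : (1:ℝ)-ζ ≠ 0)] at this
    linarith
  have ha1 : (1:ℝ) ≤ ((n - k : ℕ) : ℝ) := by
    rw [haR]; nlinarith
  have ha1' : 1 ≤ n - k := by exact_mod_cast ha1
  -- Step A : restrict the sum to Icc 1 m
  have hA : ∑ j ∈ Finset.Icc 1 (n+1), -Real.log (simesAdj δ ζ n j)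
      = ∑ j ∈ Finset.Icc 1 m, -Real.log (simesAdj δ ζ n j) := by
    symm
    apply Finset.sum_subset
    · apply Finset.Icc_subset_Icc le_rfl (by omega)
    · intro j hj hj'
      simp only [Finset.mem_Icc] at hj hj'
      have : ¬ (j ≤ n - Nat.ceil (ζ * (n:ℕ)) + 1) := by rw [← hkdef]; omega
      rw [simesAdj, if_neg this, Real.log_one, neg_zero]
  -- Step B : split off j = 1
  have hB : Finset.Icc 1 m = insert 1 (Finset.Icc 2 m) := by
    ext x; simp only [Finset.mem_Icc, Finset.mem_insert]; omega
  -- Step C : the j = 1 term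
  have hb1 := (simes_lb δ ζ hδ0 hδ1 hζ0 hζ1 n 1 hn1 le_rfl (by omega)).2
  have hδk0 : (0:ℝ) < (1-δ)/(k:ℝ) := div_pos (by linarith) hkR
  have hC : -Real.log (simesAdj δ ζ n 1) ≤ Real.log k - Real.log (1-δ) := by
    have h1 : Real.log ((1-δ)/(k:ℝ)) ≤ Real.log (simesAdj δ ζ n 1) :=
      Real.log_le_log hδk0 hb1
    rw [Real.log_div (by linarith) (by linarith)] at h1
    linarith
  -- Step D : the j ≥ 2 terms
  have hD : ∑ j ∈ Finset.Icc 2 m, -Real.log (simesAdj δ ζ n j)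
      ≤ ∑ j ∈ Finset.Icc 2 m, (Real.log n - Real.log ((j - 1 : ℕ))) := by
    apply Finset.sum_le_sum
    intro j hj
    simp only [Finset.mem_Icc] at hj
    have hj2 : 2 ≤ j := hj.1
    have hbj := (simes_lb δ ζ hδ0 hδ1 hζ0 hζ1 n j hn1 (by omega) (by rw [← hkdef]; omega)).1
    have hcast : ((j-1:ℕ):ℝ) = (j:ℝ) - 1 := by
      rw [Nat.cast_sub (by omega)]; norm_num
    have hjpos : (0:ℝ) < (j:ℝ) - 1 := by
      have : (2:ℝ) ≤ j := by exact_mod_cast hj2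
      linarith
    have h1 : Real.log (((j:ℝ)-1)/n) ≤ Real.log (simesAdj δ ζ n j) :=
      Real.log_le_log (by positivity) hbj
    rw [Real.log_div (by linarith) (by linarith)] at h1
    rw [hcast]
    linarith
  -- reindex
  have hreidx : ∑ j ∈ Finset.Icc 2 m, (Real.log n - Real.log ((j - 1 : ℕ)))
      = ∑ i ∈ Finset.Icc 1 (n - k), (Real.log n - Real.log i) := by
    have hm' : m = 1 + (n - k) := by omega
    rw [hm', show (2:ℕ) = 1 + 1 from rfl, ← Finset.map_add_left_Icc, Finset.sum_map]
    apply Finset.sum_congr rfl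
    intro i hi
    simp only [addLeftEmbedding_apply]
    have h' : 1 + i - 1 = i := by omega
    rw [h']
  -- Step E : sumlog + gmono
  have hE1 := sumlog (Real.log n) (n - k)
  have hE2 : ((n-k:ℕ):ℝ) * (1 + Real.log n - Real.log ((n-k:ℕ)))
      ≤ ((1-ζ)*n) * (1 + Real.log n - Real.log ((1-ζ)*n)) := by
    apply gmono _ _ _ (by linarith) _ (by nlinarith)
    rw [haR]; linarith
  have hE3 : ((1-ζ)*n) * (1 + Real.log n - Real.log ((1-ζ)*n))
      = (1-ζ)*n * (1 - Real.log (1-ζ)) := by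
    rw [Real.log_mul (by linarith) (by linarith)]; ring
  -- Step F : log k ≤ log n  and  -log(1-δ) ≤ log n
  have hF1 : Real.log k ≤ Real.log n := Real.log_le_log hkR (by exact_mod_cast hkn)
  have hF2 : -Real.log (1-δ) ≤ Real.log n := by
    have h1 : (1:ℝ)/n ≤ 1-δ := by
      rw [div_le_iff₀ hnR]
      have : (1/(1-δ)) * (1-δ) ≤ (n:ℝ) * (1-δ) := mul_le_mul_of_nonneg_right hnδ (by linarith)
      rw [one_div, inv_mul_cancel₀ (by linarith)] at this
      linarith
    have h2 : Real.log ((1:ℝ)/n) ≤ Real.log (1-δ) := Real.log_le_log (by positivity) h1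
    rw [one_div, Real.log_inv] at h2
    linarith
  -- Put together: S ≤ 2 log n + (1-ζ) n (1 - log(1-ζ))
  have hS : ∑ j ∈ Finset.Icc 1 (n+1), -Real.log (simesAdj δ ζ n j)
      ≤ 2 * Real.log n + (1-ζ)*n * (1 - Real.log (1-ζ)) := by
    rw [hA, hB, Finset.sum_insert (by simp)]
    calc -Real.log (simesAdj δ ζ n 1) + ∑ j ∈ Finset.Icc 2 m, -Real.log (simesAdj δ ζ n j)
        ≤ (Real.log k - Real.log (1-δ)) + ((n-k:ℕ):ℝ) * (1 + Real.log n - Real.log ((n-k:ℕ))) := by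
          have := hD.trans (le_of_eq hreidx) |>.trans hE1
          linarith
      _ ≤ 2 * Real.log n + (1-ζ)*n * (1 - Real.log (1-ζ)) := by
          rw [← hE3]; linarith [hE2]
  -- final arithmetic
  set M := 1 - Real.log (1-ζ) with hM
  have hM1 : 1 ≤ M := by
    have : Real.log (1-ζ) ≤ 0 := Real.log_nonpos (by linarith) (by linarith)
    rw [hM]; linarith
  have hlogn : 0 ≤ Real.log n := Real.log_nonneg (by exact_mod_cast hn1)
  have hgoal : 1 - ζ - (1 - ζ) * Real.log (1 - ζ) = (1-ζ)*M := by rw [hM]; ring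
  rw [hgoal]
  have hstep : (1 / ((n : ℝ) + 1)) * (∑ j ∈ Finset.Icc 1 (n+1), -Real.log (simesAdj δ ζ n j))
      ≤ (1 / ((n : ℝ) + 1)) * (2 * Real.log n + (1-ζ)*n*M) :=
    mul_le_mul_of_nonneg_left hS (by positivity)
  have h1 : (1/((n:ℝ)+1)) * ((1-ζ)*n*M) ≤ (1-ζ)*M := by
    rw [div_mul_eq_mul_div, one_mul, div_le_iff₀ (by positivity)]
    nlinarith
  have h2 : (1/((n:ℝ)+1)) * (2*Real.log n) ≤ 2 * Real.log n / n := by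
    rw [div_mul_eq_mul_div, one_mul, div_le_div_iff₀ (by positivity) hnR]
    nlinarith
  calc (1 / ((n : ℝ) + 1)) * (∑ j ∈ Finset.Icc 1 (n+1), -Real.log (simesAdj δ ζ n j))
      ≤ (1 / ((n : ℝ) + 1)) * (2 * Real.log n + (1-ζ)*n*M) := hstep
    _ = (1/((n:ℝ)+1)) * (2*Real.log n) + (1/((n:ℝ)+1)) * ((1-ζ)*n*M) := by ring
    _ ≤ (1-ζ)*M + 2 * Real.log n / n := by linarith
end

section
/- Let n ≥ k ≥ 1 be integers, δ ∈ (0,1], and let i be an integer with 1 ≤ i ≤ n − k + 1. Then the i-th Simes adjustment value satisfies the lower bound: 1 − δ^{1/k} ( Π_{ℓ=n−k+1}^{n} (ℓ − i + 1)/ℓ )^{1/k} ≥ (i − 1) / ( n − k/2 + 1/2 ). -/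
/-- **Lower bound on the Simes adjustment values.**
For integers `n ≥ k ≥ 1`, `δ ∈ (0,1]`, and `1 ≤ i ≤ n − k + 1`,
`1 − δ^{1/k} (Π_{ℓ=n−k+1}^{n} (ℓ−i+1)/ℓ)^{1/k} ≥ (i−1)/(n − k/2 + 1/2)`. -/
theorem stmt16 (n k i : ℕ) (hk1 : 1 ≤ k) (hkn : k ≤ n) (hi1 : 1 ≤ i)
    (hi : i ≤ n - k + 1) (δ : ℝ) (hδ : δ ∈ Set.Ioc (0 : ℝ) 1) :
    ((i : ℝ) - 1) / ((n : ℝ) - (k : ℝ) / 2 + 1 / 2) ≤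
      1 - δ ^ ((1 : ℝ) / (k : ℝ)) *
        (∏ l ∈ Finset.Icc (n - k + 1) n, (((l : ℝ) - (i : ℝ) + 1) / (l : ℝ))) ^
          ((1 : ℝ) / (k : ℝ)) := by
  obtain ⟨hδ0, hδ1⟩ := hδ
  set s : Finset ℕ := Finset.Icc (n - k + 1) n with hs
  have hk0 : (0 : ℝ) < k := by exact_mod_cast hk1
  have hkR : (k : ℝ) ≤ n := by exact_mod_cast hkn
  have hiR : (1 : ℝ) ≤ i := by exact_mod_cast hi1
  have hcard : s.card = k := by rw [hs, Nat.card_Icc]; omega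
  have hmem : ∀ l ∈ s, i ≤ l ∧ 1 ≤ l ∧ l ≤ n := by
    intro l hl; rw [hs, Finset.mem_Icc] at hl; omega
  have hlpos : ∀ l ∈ s, (0 : ℝ) < (l : ℝ) := by
    intro l hl; exact_mod_cast Nat.lt_of_lt_of_le Nat.zero_lt_one (hmem l hl).2.1
  have hx : ∀ l ∈ s, (0 : ℝ) ≤ ((l : ℝ) - (i : ℝ) + 1) / (l : ℝ) := by
    intro l hl
    have h1 : (i : ℝ) ≤ l := by exact_mod_cast (hmem l hl).1
    have h2 := hlpos l hl
    apply div_nonneg (by linarith) h2.le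
  set m : ℝ := (n : ℝ) - (k : ℝ) / 2 + 1 / 2 with hm
  have hm0 : (0 : ℝ) < m := by rw [hm]; linarith
  -- sum of l over s equals k * m
  have hsum : ∑ l ∈ s, (l : ℝ) = k * m := by
    have e1 : s = Finset.Ico (n - k + 1) (n + 1) := by rw [hs, Finset.Ico_add_one_right_eq_Icc]
    have gauss : ∀ w : ℕ, (∑ l ∈ Finset.range w, (l : ℝ)) * 2 = (w : ℝ) * ((w : ℝ) - 1) := by
      intro w
      induction w with
      | zero => simp
      | succ v ih =>
        rw [Finset.sum_range_succ]
        push_cast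
        ring_nf
        ring_nf at ih
        linarith
    have e2 : ∑ l ∈ Finset.range (n - k + 1), (l : ℝ) + ∑ l ∈ s, (l : ℝ)
        = ∑ l ∈ Finset.range (n + 1), (l : ℝ) := by
      rw [e1, Finset.range_eq_Ico, Finset.range_eq_Ico]
      exact Finset.sum_Ico_consecutive (fun l : ℕ => (l : ℝ)) (by omega : 0 ≤ n - k + 1) (by omega : n - k + 1 ≤ n + 1)
    have g1 := gauss (n - k + 1)
    have g2 := gauss (n + 1)
    have hc : ((n - k + 1 : ℕ) : ℝ) = (n : ℝ) - k + 1 := by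
      have := Nat.cast_sub hkn (R := ℝ); push_cast [this]; ring
    rw [hc] at g1
    push_cast at g2
    rw [hm]
    nlinarith [e2, g1, g2]
  -- Chebyshev / AM-HM : k * k ≤ (∑ l) * (∑ 1/l)
  set T : ℝ := ∑ l ∈ s, 1 / (l : ℝ) with hT
  have hanti : AntivaryOn (fun l : ℕ => (l : ℝ)) (fun l : ℕ => 1 / (l : ℝ)) (s : Set ℕ) := by
    intro a ha b hb hab
    simp only at hab ⊢
    have ha0 := hlpos a (by simpa using ha)
    have hb0 := hlpos b (by simpa using hb)
    by_contra hcon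
    push_neg at hcon
    have : 1 / (b : ℝ) < 1 / (a : ℝ) := by
      apply one_div_lt_one_div_of_lt ha0 hcon
    linarith
  have hcheb := hanti.card_mul_sum_le_sum_mul_sum
  have hones : ∑ l ∈ s, (l : ℝ) * (1 / (l : ℝ)) = (k : ℝ) := by
    have h1 : ∀ l ∈ s, (l : ℝ) * (1 / (l : ℝ)) = 1 :=
      fun l hl => by rw [mul_one_div, div_self (hlpos l hl).ne']
    rw [Finset.sum_congr rfl h1, Finset.sum_const, hcard, nsmul_eq_mul, mul_one]
  rw [hones, hcard, hsum, ← hT] at hcheb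
  have hTm : 1 / m ≤ T / k := by
    rw [div_le_div_iff₀ hm0 hk0]
    nlinarith [hcheb, hk0, hm0]
  -- AM-GM
  have hw' : ∑ _l ∈ s, (1 / (k : ℝ)) = 1 := by
    rw [Finset.sum_const, hcard, nsmul_eq_mul]
    field_simp
  have hgm := Real.geom_mean_le_arith_mean_weighted s (fun _ => 1 / (k : ℝ))
    (fun l => ((l : ℝ) - (i : ℝ) + 1) / (l : ℝ)) (fun _ _ => by positivity) hw' hx
  have hprod := Real.finset_prod_rpow s
    (fun l => ((l : ℝ) - (i : ℝ) + 1) / (l : ℝ)) hx (1 / (k : ℝ))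
  rw [hprod] at hgm
  -- compute the arithmetic mean
  have hsum2 : ∑ l ∈ s, (1 / (k : ℝ)) * (((l : ℝ) - (i : ℝ) + 1) / (l : ℝ))
      = 1 - ((i : ℝ) - 1) * (T / k) := by
    have step : ∀ l ∈ s, (1 / (k : ℝ)) * (((l : ℝ) - (i : ℝ) + 1) / (l : ℝ))
        = 1 / (k : ℝ) - (((i : ℝ) - 1) / k) * (1 / (l : ℝ)) := by
      intro l hl
      have hl0 := (hlpos l hl).ne'
      field_simp
      ring
    rw [Finset.sum_congr rfl step, Finset.sum_sub_distrib, Finset.sum_const, hcard,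
      ← Finset.mul_sum, ← hT, nsmul_eq_mul]
    field_simp
  rw [hsum2] at hgm
  -- assemble
  have hkey : (∏ l ∈ s, (((l : ℝ) - (i : ℝ) + 1) / (l : ℝ))) ^ ((1 : ℝ) / (k : ℝ))
      ≤ 1 - ((i : ℝ) - 1) / m := by
    have h1 : ((i : ℝ) - 1) / m ≤ ((i : ℝ) - 1) * (T / k) := by
      rw [div_eq_mul_one_div]
      exact mul_le_mul_of_nonneg_left hTm (by linarith)
    linarith
  have hδk : δ ^ ((1 : ℝ) / (k : ℝ)) ≤ 1 := Real.rpow_le_one hδ0.le hδ1 (by positivity)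
  have hPnn : (0 : ℝ) ≤ (∏ l ∈ s, (((l : ℝ) - (i : ℝ) + 1) / (l : ℝ))) ^ ((1 : ℝ) / (k : ℝ)) :=
    Real.rpow_nonneg (Finset.prod_nonneg hx) _
  have := mul_le_of_le_one_left hPnn hδk
  rw [hm] at hkey
  linarith
end

section
/- Let n ≥ k ≥ 1 be integers, δ ∈ (0,1], and let i be an integer with 1 ≤ i ≤ n − k + 1. Then the i-th Simes adjustment value satisfies the upper bound: 1 − δ^{1/k} ( Π_{ℓ=n−k+1}^{n} (ℓ − i + 1)/ℓ )^{1/k} ≤ 1 − δ^{1/k} √( (1 − (i−1)/n) (1 − (i−1)/(n−k+1)) ). Equivalently, ( Π_{ℓ=n−k+1}^{n} (1 − (i−1)/ℓ) )^{1/k} ≥ √( (1 − (i−1)/n)(1 − (i−1)/(n−k+1)) ). -/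
private lemma pair_ineq' (a b l : ℕ) (c : ℝ) (hc : 0 ≤ c) (hca : c + 1 ≤ (a:ℝ))
    (h1 : a ≤ l) (h2 : l ≤ b) :
    (1 - c/(a:ℝ)) * (1 - c/(b:ℝ)) ≤ (1 - c/(l:ℝ)) * (1 - c/((a + b - l : ℕ):ℝ)) := by

  have hcast : ((a + b - l : ℕ):ℝ) = (a:ℝ) + (b:ℝ) - (l:ℝ) := by
    have : l ≤ a + b := le_trans h2 (Nat.le_add_left _ _)
    push_cast [this]; ring
  rw [hcast]
  have hA : (0:ℝ) < a := by linarith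
  have hL : (a:ℝ) ≤ l := by exact_mod_cast h1
  have hB : (l:ℝ) ≤ b := by exact_mod_cast h2
  have hLp : (0:ℝ) < l := by linarith
  have hBp : (0:ℝ) < b := by linarith
  have hMp : (0:ℝ) < (a:ℝ) + b - l := by linarith
  rw [one_sub_div (ne_of_gt hA), one_sub_div (ne_of_gt hBp), one_sub_div (ne_of_gt hLp),
    one_sub_div (ne_of_gt hMp), div_mul_div_comm, div_mul_div_comm,
    div_le_div_iff₀ (by positivity) (by positivity)]
  nlinarith [mul_nonneg (mul_nonneg (mul_nonneg (sub_nonneg.2 hL) (sub_nonneg.2 hB)) hc)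
    (by linarith : (0:ℝ) ≤ (a:ℝ) + b - c)]

private lemma stmt17_aux (n k i : ℕ) (hk1 : 1 ≤ k) (hkn : k ≤ n) (hi1 : 1 ≤ i)
    (hi : i ≤ n - k + 1) :
      Real.sqrt ((1 - ((i : ℝ) - 1) / (n : ℝ)) *
          (1 - ((i : ℝ) - 1) / ((n : ℝ) - (k : ℝ) + 1))) ≤
        (∏ l ∈ Finset.Icc (n - k + 1) n, (1 - ((i : ℝ) - 1) / (l : ℝ))) ^
          ((1 : ℝ) / (k : ℝ)) := by
  set a := n - k + 1 with ha
  set c : ℝ := (i : ℝ) - 1 with hcdef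
  have hc : 0 ≤ c := by simp [hcdef]; exact_mod_cast hi1
  have hcastA : ((a:ℕ):ℝ) = (n:ℝ) - (k:ℝ) + 1 := by
    rw [ha]; push_cast [hkn]; ring
  have hca : c + 1 ≤ (a:ℝ) := by
    have : (i:ℝ) ≤ (a:ℝ) := by exact_mod_cast hi
    simp [hcdef]; linarith
  have han : a ≤ n := by omega
  have hcard : (Finset.Icc a n).card = k := by
    rw [Nat.card_Icc]; omega
  set P : ℝ := ∏ l ∈ Finset.Icc a n, (1 - c / (l:ℝ)) with hP
  have hfac : ∀ l ∈ Finset.Icc a n, 0 < 1 - c / (l:ℝ) := by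
    intro l hl
    simp only [Finset.mem_Icc] at hl
    have hL : (a:ℝ) ≤ l := by exact_mod_cast hl.1
    have hLp : (0:ℝ) < l := by linarith
    rw [sub_pos, div_lt_one hLp]; linarith
  have hPpos : 0 < P := Finset.prod_pos hfac
  have hrefl : ∏ l ∈ Finset.Icc a n, (1 - c / (((a + n - l : ℕ)):ℝ)) = P := by
    rw [hP]
    refine Finset.prod_nbij' (fun l => a + n - l) (fun l => a + n - l) ?_ ?_ ?_ ?_ ?_
    · intro x hx; simp only [Finset.mem_Icc] at hx ⊢; omega
    · intro x hx; simp only [Finset.mem_Icc] at hx ⊢; omega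
    · intro x hx; simp only [Finset.mem_Icc] at hx; show a + n - (a + n - x) = x; omega
    · intro x hx; simp only [Finset.mem_Icc] at hx; show a + n - (a + n - x) = x; omega
    · intro x hx; simp only [Finset.mem_Icc] at hx
      show (1 - c / ((a + n - x : ℕ):ℝ)) = 1 - c / (((a + n - x : ℕ)):ℝ)
      rfl
  set Q : ℝ := (1 - c/(a:ℝ)) * (1 - c/(n:ℝ)) with hQ
  have hQ0 : 0 ≤ Q := by
    have h1 := hfac a (by simp [Finset.mem_Icc]; omega)
    have h2 := hfac n (by simp [Finset.mem_Icc]; omega)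
    positivity
  have hkey : Q ^ k ≤ P ^ 2 := by
    calc Q ^ k = ∏ _l ∈ Finset.Icc a n, Q := by rw [Finset.prod_const, hcard]
    _ ≤ ∏ l ∈ Finset.Icc a n, ((1 - c/(l:ℝ)) * (1 - c/((a + n - l : ℕ):ℝ))) := by
        refine Finset.prod_le_prod (fun l hl => hQ0) ?_
        intro l hl
        simp only [Finset.mem_Icc] at hl
        exact pair_ineq' a n l c hc hca hl.1 hl.2
    _ = P ^ 2 := by
        rw [Finset.prod_mul_distrib, hrefl, sq]
  -- now rpow
  have hk0 : (0:ℝ) < k := by exact_mod_cast hk1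
  have hmono : (Q ^ k) ^ ((1:ℝ)/(2*k)) ≤ (P ^ 2) ^ ((1:ℝ)/(2*k)) :=
    Real.rpow_le_rpow (by positivity) hkey (by positivity)
  have hleft : (Q ^ k) ^ ((1:ℝ)/(2*k)) = Real.sqrt Q := by
    rw [← Real.rpow_natCast Q k, ← Real.rpow_mul hQ0, Real.sqrt_eq_rpow]
    congr 1
    field_simp
  have hright : (P ^ 2) ^ ((1:ℝ)/(2*k)) = P ^ ((1:ℝ)/(k:ℝ)) := by
    rw [← Real.rpow_natCast P 2, ← Real.rpow_mul hPpos.le]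
    congr 1
    push_cast
    field_simp
  have := hleft ▸ hright ▸ hmono
  refine le_trans (le_of_eq ?_) this
  rw [hQ, hcastA]
  ring_nf


/-- **Upper bound on the Simes adjustment values.**
For integers `n ≥ k ≥ 1`, `δ ∈ (0,1]`, and `1 ≤ i ≤ n − k + 1`,
`1 − δ^{1/k} (Π_{ℓ=n−k+1}^{n} (ℓ−i+1)/ℓ)^{1/k}
  ≤ 1 − δ^{1/k} √((1 − (i−1)/n)(1 − (i−1)/(n−k+1)))`,
or equivalently
`(Π_{ℓ=n−k+1}^{n} (1 − (i−1)/ℓ))^{1/k} ≥ √((1 − (i−1)/n)(1 − (i−1)/(n−k+1)))`. -/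
theorem stmt17 (n k i : ℕ) (hk1 : 1 ≤ k) (hkn : k ≤ n) (hi1 : 1 ≤ i)
    (hi : i ≤ n - k + 1) (δ : ℝ) (hδ : δ ∈ Set.Ioc (0 : ℝ) 1) :
    (1 - δ ^ ((1 : ℝ) / (k : ℝ)) *
        (∏ l ∈ Finset.Icc (n - k + 1) n, (((l : ℝ) - (i : ℝ) + 1) / (l : ℝ))) ^
          ((1 : ℝ) / (k : ℝ)) ≤
      1 - δ ^ ((1 : ℝ) / (k : ℝ)) *
        Real.sqrt ((1 - ((i : ℝ) - 1) / (n : ℝ)) *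
          (1 - ((i : ℝ) - 1) / ((n : ℝ) - (k : ℝ) + 1)))) ∧
      Real.sqrt ((1 - ((i : ℝ) - 1) / (n : ℝ)) *
          (1 - ((i : ℝ) - 1) / ((n : ℝ) - (k : ℝ) + 1))) ≤
        (∏ l ∈ Finset.Icc (n - k + 1) n, (1 - ((i : ℝ) - 1) / (l : ℝ))) ^
          ((1 : ℝ) / (k : ℝ)) := by
  have h2 := stmt17_aux n k i hk1 hkn hi1 hi
  refine ⟨?_, h2⟩
  have hprodeq : ∏ l ∈ Finset.Icc (n - k + 1) n, (((l : ℝ) - (i : ℝ) + 1) / (l : ℝ)) =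
      ∏ l ∈ Finset.Icc (n - k + 1) n, (1 - ((i : ℝ) - 1) / (l : ℝ)) := by
    refine Finset.prod_congr rfl fun l hl => ?_
    simp only [Finset.mem_Icc] at hl
    have hl0 : (0:ℝ) < l := by
      have : 1 ≤ l := by omega
      exact_mod_cast this
    field_simp
    ring
  rw [hprodeq]
  have hd : 0 ≤ δ ^ ((1 : ℝ) / (k : ℝ)) := Real.rpow_nonneg hδ.1.le _
  exact sub_le_sub_left (mul_le_mul_of_nonneg_left h2 hd) 1
end
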